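/- arXiv:2510.16703 — 15 statements merged into one kernel-verified Lean document; each statement's English description precedes it below -/
import Mathlib

section
/- (Theorem 1: functional elimination preserves marginals on the context.) Assume that for every r ∈ T, fW(r, ·) takes values in {0,1} and ∑_{w} fW(r,w) = 1. Then for every r ∈ T and every tuple c : (i : Fin k) → C i, ∑_{w} g(r) · fW(r,w) · ∏_{i < k} f i r w (c i) = g(r) · ∏_{i < k} ( ∑_{w} fW(r,w) · f i r w (c i) ). In words: the joint distribution of the model obtained by functionally eliminating W, whose CPT for child i is ∑_w fW · (f i), agrees with the W-marginal of the original joint distribution on every instantiation consistent with the context of the conditional functional dependency. -/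
/-- Theorem 1: functional elimination preserves marginals on the context of a
conditional functional dependency.  `R` is the set of instantiations of all
variables other than `W` and the children of `W`; `C i` is the state space of
the `i`-th child of `W`; `g` is the product of all CPT factors not involving
`W`; `fW` is the CPT of `W`; `f i` is the CPT of the `i`-th child of `W`;
`T ⊆ R` is the set of instantiations consistent with the context `p₂` of the
CFD `[P₁, P₂ = p₂] → W`. -/
theorem functional_elimination_preserves_marginals
    {R W : Type*} {k : ℕ} {C : Fin k → Type*}
    [Fintype R] [Nonempty R] [Fintype W] [Nonempty W]
    [∀ i, Fintype (C i)] [∀ i, Nonempty (C i)]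
    (g : R → ℝ) (fW : R → W → ℝ) (f : (i : Fin k) → R → W → C i → ℝ)
    (T : Set R)
    (hdet : ∀ r ∈ T, ∀ w, fW r w = 0 ∨ fW r w = 1)
    (hsum : ∀ r ∈ T, ∑ w, fW r w = 1) :
    ∀ r ∈ T, ∀ c : (i : Fin k) → C i,
      ∑ w, g r * fW r w * ∏ i, f i r w (c i)
        = g r * ∏ i, ∑ w, fW r w * f i r w (c i) := by
  intro r hr c
  classical
  -- there is a unique w₀ with fW r w₀ = 1
  have hex : ∃ w₀, fW r w₀ = 1 := by
    by_contra h
    push_neg at h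
    have : ∑ w, fW r w = 0 := Finset.sum_eq_zero (fun w _ => by
      rcases hdet r hr w with h0 | h1
      · exact h0
      · exact absurd h1 (h w))
    rw [hsum r hr] at this
    norm_num at this
  obtain ⟨w₀, hw₀⟩ := hex
  have hzero : ∀ w, w ≠ w₀ → fW r w = 0 := by
    intro w hw
    have h1 : ∑ x ∈ Finset.univ.erase w₀, fW r x = 0 := by
      have := Finset.add_sum_erase Finset.univ (fW r) (Finset.mem_univ w₀)
      rw [hsum r hr, hw₀] at this
      linarith
    have hnn : ∀ x ∈ Finset.univ.erase w₀, 0 ≤ fW r x := by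
      intro x _
      rcases hdet r hr x with h0 | h1 <;> first | (rw [h0]) | (rw [h1]; norm_num)
    exact (Finset.sum_eq_zero_iff_of_nonneg hnn).mp h1 w
      (Finset.mem_erase.mpr ⟨hw, Finset.mem_univ w⟩)
  have hL : ∑ w, g r * fW r w * ∏ i, f i r w (c i)
      = g r * ∏ i, f i r w₀ (c i) := by
    rw [Finset.sum_eq_single w₀
      (fun w _ hw => by rw [hzero w hw]; ring)
      (fun h => absurd (Finset.mem_univ w₀) h)]
    rw [hw₀]; ring
  have hR : ∀ i : Fin k, ∑ w, fW r w * f i r w (c i) = f i r w₀ (c i) := by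
    intro i
    rw [Finset.sum_eq_single w₀
      (fun w _ hw => by rw [hzero w hw]; ring)
      (fun h => absurd (Finset.mem_univ w₀) h)]
    rw [hw₀]; ring
  simp only [hR]
  exact hL
end

section
/- (Proposition 2, identifiability half.) Assume the CSI constraint: f_S(s|d,y,j₀) = f_S(s|d',y,j₀) for all s, y, d, d'. If Pr(Y=y₀, J=j₀) > 0, then Pr_{Y=y₀}(J=j₀, S=s₀) = Pr(J=j₀) · Pr(S=s₀ | Y=y₀, J=j₀), where Pr(J=j₀) = ∑_{y,s} Pr(y,j₀,s), Pr(Y=y₀,J=j₀) = ∑_{s} Pr(y₀,j₀,s), and Pr(S=s₀|Y=y₀,J=j₀) = Pr(y₀,j₀,s₀) / Pr(Y=y₀,J=j₀). -/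
/-- A distribution over a finite type: nonnegative and sums to one. -/
def IsDist {Z : Type*} [Fintype Z] (f : Z → ℝ) : Prop :=
  (∀ z, 0 ≤ f z) ∧ ∑ z, f z = 1

/-- A stochastic CPT: nonnegative and each row sums to one. -/
def IsCPT {P Z : Type*} [Fintype Z] (f : P → Z → ℝ) : Prop :=
  (∀ p z, 0 ≤ f p z) ∧ ∀ p, ∑ z, f p z = 1

/-- Observational distribution of the company graph:
`Pr(y,j,s) = ∑_{a,d} f_A(a) f_D(d) f_Y(y|a) f_J(j|a,d) f_S(s|d,y,j)`. -/
noncomputable def companyPr {A D Y J S : Type*} [Fintype A] [Fintype D]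
    (fA : A → ℝ) (fD : D → ℝ) (fY : A → Y → ℝ) (fJ : A × D → J → ℝ)
    (fS : D × Y × J → S → ℝ) (y : Y) (j : J) (s : S) : ℝ :=
  ∑ a, ∑ d, fA a * fD d * fY a y * fJ (a, d) j * fS (d, y, j) s

/-- Interventional quantity of the company graph (truncated factorization,
intervening `Y = y`): `Pr_{Y=y}(J=j,S=s) = ∑_{a,d} f_A(a) f_D(d) f_J(j|a,d) f_S(s|d,y,j)`. -/
noncomputable def companyInt {A D Y J S : Type*} [Fintype A] [Fintype D]
    (fA : A → ℝ) (fD : D → ℝ) (fJ : A × D → J → ℝ)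
    (fS : D × Y × J → S → ℝ) (y : Y) (j : J) (s : S) : ℝ :=
  ∑ a, ∑ d, fA a * fD d * fJ (a, d) j * fS (d, y, j) s

/-- Proposition 2, identifiability half: under the CSI
`(S ⟂ D | Y, J = j₀)`, the state-based causal effect
`Pr_{Y=y₀}(J=j₀, S=s₀)` equals `Pr(J=j₀) · Pr(S=s₀ | Y=y₀, J=j₀)`. -/
theorem company_state_identifiable
    {A D Y J S : Type*} [Fintype A] [Fintype D] [Fintype Y] [Fintype J] [Fintype S]
    [Nonempty A] [Nonempty D] [Nonempty Y] [Nonempty J] [Nonempty S]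
    (fA : A → ℝ) (fD : D → ℝ) (fY : A → Y → ℝ) (fJ : A × D → J → ℝ)
    (fS : D × Y × J → S → ℝ)
    (hA : IsDist fA) (hD : IsDist fD) (hY : IsCPT fY) (hJ : IsCPT fJ) (hS : IsCPT fS)
    (y₀ : Y) (j₀ : J) (s₀ : S)
    (csi : ∀ (s : S) (y : Y) (d d' : D), fS (d, y, j₀) s = fS (d', y, j₀) s)
    (hpos : 0 < ∑ s, companyPr fA fD fY fJ fS y₀ j₀ s) :
    companyInt fA fD fJ fS y₀ j₀ s₀
      = (∑ y, ∑ s, companyPr fA fD fY fJ fS y j₀ s)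
        * (companyPr fA fD fY fJ fS y₀ j₀ s₀
            / ∑ s, companyPr fA fD fY fJ fS y₀ j₀ s) := by

  obtain ⟨d₀⟩ := ‹Nonempty D›
  set g : Y → S → ℝ := fun y s => fS (d₀, y, j₀) s with hg
  set K : Y → ℝ := fun y => ∑ a, ∑ d, fA a * fD d * fY a y * fJ (a, d) j₀ with hK
  set C : ℝ := ∑ a, ∑ d, fA a * fD d * fJ (a, d) j₀ with hC
  have hPr : ∀ y s, companyPr fA fD fY fJ fS y j₀ s = K y * g y s := by
    intro y s
    have : companyPr fA fD fY fJ fS y j₀ s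
        = ∑ a, ∑ d, (fA a * fD d * fY a y * fJ (a, d) j₀) * g y s := by
      unfold companyPr
      exact Finset.sum_congr rfl fun a _ => Finset.sum_congr rfl fun d _ => by
        rw [csi s y d d₀]
    rw [this, hK]
    simp [Finset.sum_mul]
  have hInt : companyInt fA fD fJ fS y₀ j₀ s₀ = C * g y₀ s₀ := by
    have : companyInt fA fD fJ fS y₀ j₀ s₀
        = ∑ a, ∑ d, (fA a * fD d * fJ (a, d) j₀) * g y₀ s₀ := by
      unfold companyInt
      exact Finset.sum_congr rfl fun a _ => Finset.sum_congr rfl fun d _ => by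
        rw [csi s₀ y₀ d d₀]
    rw [this, hC]
    simp [Finset.sum_mul]
  have hSumS : ∀ y, ∑ s, companyPr fA fD fY fJ fS y j₀ s = K y := by
    intro y
    simp only [hPr]
    rw [← Finset.mul_sum, hg]
    simp [hS.2 (d₀, y, j₀)]
  have hSumY : ∑ y, K y = C := by
    rw [hK, hC]
    rw [Finset.sum_comm]
    refine Finset.sum_congr rfl fun a _ => ?_
    rw [Finset.sum_comm]
    refine Finset.sum_congr rfl fun d _ => ?_
    have : ∑ y, fA a * fD d * fY a y * fJ (a, d) j₀
        = (fA a * fD d * fJ (a, d) j₀) * ∑ y, fY a y := by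
      rw [Finset.mul_sum]
      exact Finset.sum_congr rfl fun y _ => by ring
    rw [this, hY.2 a, mul_one]
  have hKpos : K y₀ ≠ 0 := by
    rw [← hSumS y₀]; exact ne_of_gt hpos
  rw [hInt, hPr y₀ s₀]
  simp only [hSumS, hSumY]
  field_simp
end

section
/- (Proposition 2, unidentifiability half.) There exist finite state spaces for the variables (one may take A, D, Y, S binary and J with three states, with j₀ one of J's states) and two models, i.e., two tuples of stochastic CPTs (f¹_A, f¹_D, f¹_Y, f¹_J, f¹_S) and (f²_A, f²_D, f²_Y, f²_J, f²_S), both satisfying the CSI constraint f_S(s|d,y,j₀) = f_S(s|d',y,j₀) for all s,y,d,d', such that the induced observational distributions are equal and strictly positive, Pr¹(y,j,s) = Pr²(y,j,s) > 0 for all (y,j,s), yet Pr¹_{Y=y}(J=j, S=s) ≠ Pr²_{Y=y}(J=j, S=s) for some states y, j, s. -/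
noncomputable def myfY : Fin 2 → Fin 2 → ℝ := fun a y => if a = y then 9/10 else 1/10

noncomputable def myfJ : Fin 2 × Fin 2 → Fin 3 → ℝ := fun p j =>
  if j = 1 then (if p.1 = p.2 then 3/5 else 1/5) else (if p.1 = p.2 then 1/5 else 2/5)

noncomputable def myfS1 : Fin 2 × Fin 2 × Fin 3 → Fin 2 → ℝ := fun _ _ => 1/2

noncomputable def myfS2 : Fin 2 × Fin 2 × Fin 3 → Fin 2 → ℝ := fun p s =>
  if p.2.1 = 0 ∧ p.2.2 = 1 then
    (if p.1 = 0 then (if s = 0 then 14/25 else 11/25)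
     else (if s = 0 then 9/25 else 16/25))
  else 1/2

/-- Proposition 2, unidentifiability half: with `A, D, Y, S` binary and `J`
with three states, there are two models satisfying the CSI
`(S ⟂ D | Y, J = j₀)` that induce the same strictly positive observational
distribution but disagree on some interventional quantity `Pr_{Y=y}(J=j,S=s)`. -/
theorem company_variable_unidentifiable :
    ∃ (j₀ : Fin 3)
      (fA₁ fA₂ fD₁ fD₂ : Fin 2 → ℝ)
      (fY₁ fY₂ : Fin 2 → Fin 2 → ℝ)
      (fJ₁ fJ₂ : Fin 2 × Fin 2 → Fin 3 → ℝ)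
      (fS₁ fS₂ : Fin 2 × Fin 2 × Fin 3 → Fin 2 → ℝ),
      IsDist fA₁ ∧ IsDist fA₂ ∧ IsDist fD₁ ∧ IsDist fD₂ ∧
      IsCPT fY₁ ∧ IsCPT fY₂ ∧ IsCPT fJ₁ ∧ IsCPT fJ₂ ∧ IsCPT fS₁ ∧ IsCPT fS₂ ∧
      (∀ (s y : Fin 2) (d d' : Fin 2), fS₁ (d, y, j₀) s = fS₁ (d', y, j₀) s) ∧
      (∀ (s y : Fin 2) (d d' : Fin 2), fS₂ (d, y, j₀) s = fS₂ (d', y, j₀) s) ∧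
      (∀ y j s, companyPr fA₁ fD₁ fY₁ fJ₁ fS₁ y j s
                  = companyPr fA₂ fD₂ fY₂ fJ₂ fS₂ y j s) ∧
      (∀ y j s, 0 < companyPr fA₁ fD₁ fY₁ fJ₁ fS₁ y j s) ∧
      ∃ y j s, companyInt fA₁ fD₁ fJ₁ fS₁ y j s
                 ≠ companyInt fA₂ fD₂ fJ₂ fS₂ y j s := by
  refine ⟨0, (fun _ => 1/2), (fun _ => 1/2), (fun _ => 1/2), (fun _ => 1/2),
    myfY, myfY, myfJ, myfJ, myfS1, myfS2, ?_, ?_, ?_, ?_, ?_, ?_, ?_, ?_, ?_, ?_,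
    ?_, ?_, ?_, ?_, ?_⟩
  · exact ⟨fun _ => by norm_num, by norm_num [Fin.sum_univ_two]⟩
  · exact ⟨fun _ => by norm_num, by norm_num [Fin.sum_univ_two]⟩
  · exact ⟨fun _ => by norm_num, by norm_num [Fin.sum_univ_two]⟩
  · exact ⟨fun _ => by norm_num, by norm_num [Fin.sum_univ_two]⟩
  · exact ⟨fun a y => by unfold myfY; split <;> norm_num,
      fun a => by fin_cases a <;> norm_num [myfY, Fin.sum_univ_two]⟩
  · exact ⟨fun a y => by unfold myfY; split <;> norm_num,
      fun a => by fin_cases a <;> norm_num [myfY, Fin.sum_univ_two]⟩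
  · exact ⟨fun p j => by unfold myfJ; split <;> split <;> norm_num,
      fun p => by
        obtain ⟨a, d⟩ := p
        fin_cases a <;> fin_cases d <;> norm_num [myfJ, Fin.sum_univ_three, Fin.ext_iff]⟩
  · exact ⟨fun p j => by unfold myfJ; split <;> split <;> norm_num,
      fun p => by
        obtain ⟨a, d⟩ := p
        fin_cases a <;> fin_cases d <;> norm_num [myfJ, Fin.sum_univ_three, Fin.ext_iff]⟩
  · exact ⟨fun _ _ => by norm_num [myfS1],
      fun _ => by norm_num [myfS1, Fin.sum_univ_two]⟩
  · refine ⟨fun p s => ?_, fun p => ?_⟩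
    · unfold myfS2
      split
      · split <;> split <;> norm_num
      · norm_num
    · obtain ⟨d, y, j⟩ := p
      fin_cases d <;> fin_cases y <;> fin_cases j <;>
        norm_num [myfS2, Fin.sum_univ_two]
  · intro s y d d'; simp [myfS1]
  · intro s y d d'
    fin_cases d <;> fin_cases d' <;> simp [myfS2]
  · intro y j s
    fin_cases y <;> fin_cases j <;> fin_cases s <;>
      norm_num [companyPr, myfY, myfJ, myfS1, myfS2, Fin.sum_univ_two]
  · intro y j s
    fin_cases y <;> fin_cases j <;> fin_cases s <;>
      norm_num [companyPr, myfY, myfJ, myfS1, Fin.sum_univ_two]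
  · refine ⟨0, 1, 0, ?_⟩
    simp [companyInt, myfJ, myfS1, myfS2, Fin.sum_univ_two]
    norm_num
end

section
/- (Proposition 4, identifiability half.) Assume the conditional functional dependency [T, C=c₀] → F: for every t, f_F(·|c₀,t) takes values in {0,1}. If Pr(C=c₀, T=t, D=d₀) > 0 for every t, then Pr_{C=c₀,D=d₀}(R=r₀) = ∑_{t} Pr(T=t) · Pr(R=r₀ | T=t, C=c₀, D=d₀), where Pr(T=t) = ∑_{c,d,r} Pr(c,t,d,r) and Pr(R=r₀|T=t,C=c₀,D=d₀) = Pr(c₀,t,d₀,r₀) / ∑_{r} Pr(c₀,t,d₀,r). -/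
/-- Observational distribution of the flu graph:
`Pr(c,t,d,r) = ∑_φ f_C(c) f_T(t) f_F(φ|c,t) f_D(d|φ) f_R(r|φ,d)`. -/
noncomputable def fluPr {C T D R F : Type*} [Fintype F]
    (fC : C → ℝ) (fT : T → ℝ) (fF : C × T → F → ℝ) (fD : F → D → ℝ)
    (fR : F × D → R → ℝ) (c : C) (t : T) (d : D) (r : R) : ℝ :=
  ∑ φ, fC c * fT t * fF (c, t) φ * fD φ d * fR (φ, d) r

/-- Interventional quantity of the flu graph (intervening `C = c`, `D = d`):
`Pr_{C=c,D=d}(R=r) = ∑_{t,φ} f_T(t) f_F(φ|c,t) f_R(r|φ,d)`. -/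
noncomputable def fluInt {C T D R F : Type*} [Fintype T] [Fintype F]
    (fT : T → ℝ) (fF : C × T → F → ℝ) (fR : F × D → R → ℝ)
    (c : C) (d : D) (r : R) : ℝ :=
  ∑ t, ∑ φ, fT t * fF (c, t) φ * fR (φ, d) r

lemma one_hot {F : Type*} [Fintype F] (w : F → ℝ)
    (h01 : ∀ φ, w φ = 0 ∨ w φ = 1) (hsum : ∑ φ, w φ = 1) :
    ∃ φ₀, w φ₀ = 1 ∧ ∀ φ, φ ≠ φ₀ → w φ = 0 := by
  classical
  have hex : ∃ φ₀, w φ₀ = 1 := by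
    by_contra h
    push_neg at h
    have : ∀ φ, w φ = 0 := fun φ => (h01 φ).resolve_right (h φ)
    simp [this] at hsum
  obtain ⟨φ₀, hφ₀⟩ := hex
  have hrest : ∑ φ ∈ Finset.univ.erase φ₀, w φ = 0 := by
    have := Finset.add_sum_erase Finset.univ w (Finset.mem_univ φ₀)
    rw [hsum] at this
    linarith [this, hφ₀]
  have hnn : ∀ ψ ∈ Finset.univ.erase φ₀, 0 ≤ w ψ := by
    intro ψ _
    rcases h01 ψ with h | h <;> rw [h] <;> norm_num
  exact ⟨φ₀, hφ₀, fun φ hne =>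
    (Finset.sum_eq_zero_iff_of_nonneg hnn).mp hrest φ
      (Finset.mem_erase.mpr ⟨hne, Finset.mem_univ φ⟩)⟩

/-- Proposition 4, identifiability half: under the CFD `[T, C=c₀] → F`,
`Pr_{C=c₀,D=d₀}(R=r₀) = ∑_t Pr(T=t) · Pr(R=r₀ | T=t, C=c₀, D=d₀)`. -/
theorem flu_state_identifiable
    {C T D R F : Type*} [Fintype C] [Fintype T] [Fintype D] [Fintype R] [Fintype F]
    [Nonempty C] [Nonempty T] [Nonempty D] [Nonempty R] [Nonempty F]
    (fC : C → ℝ) (fT : T → ℝ) (fF : C × T → F → ℝ) (fD : F → D → ℝ)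
    (fR : F × D → R → ℝ)
    (hC : IsDist fC) (hT : IsDist fT) (hF : IsCPT fF) (hD : IsCPT fD) (hR : IsCPT fR)
    (c₀ : C) (d₀ : D) (r₀ : R)
    (cfd : ∀ (t : T) (φ : F), fF (c₀, t) φ = 0 ∨ fF (c₀, t) φ = 1)
    (hpos : ∀ t : T, 0 < ∑ r, fluPr fC fT fF fD fR c₀ t d₀ r) :
    fluInt fT fF fR c₀ d₀ r₀
      = ∑ t, (∑ c, ∑ d, ∑ r, fluPr fC fT fF fD fR c t d r)
          * (fluPr fC fT fF fD fR c₀ t d₀ r₀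
              / ∑ r, fluPr fC fT fF fD fR c₀ t d₀ r) := by
  classical
  -- sum over r of fluPr
  have hsumr : ∀ (c : C) (t : T) (d : D),
      (∑ r, fluPr fC fT fF fD fR c t d r)
        = ∑ φ, fC c * fT t * fF (c, t) φ * fD φ d := by
    intro c t d
    unfold fluPr
    rw [Finset.sum_comm]
    refine Finset.sum_congr rfl fun φ _ => ?_
    rw [← Finset.mul_sum, hR.2, mul_one]
  -- marginal of T
  have hmarg : ∀ t : T,
      (∑ c, ∑ d, ∑ r, fluPr fC fT fF fD fR c t d r) = fT t := by
    intro t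
    have h1 : ∀ c : C, (∑ d, ∑ r, fluPr fC fT fF fD fR c t d r) = fC c * fT t := by
      intro c
      calc (∑ d, ∑ r, fluPr fC fT fF fD fR c t d r)
          = ∑ d, ∑ φ, fC c * fT t * fF (c, t) φ * fD φ d := by
            exact Finset.sum_congr rfl fun d _ => hsumr c t d
        _ = ∑ φ, ∑ d, fC c * fT t * fF (c, t) φ * fD φ d := Finset.sum_comm
        _ = ∑ φ, fC c * fT t * fF (c, t) φ := by
            refine Finset.sum_congr rfl fun φ _ => ?_
            rw [← Finset.mul_sum, hD.2, mul_one]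
        _ = fC c * fT t := by
            rw [← Finset.mul_sum, hF.2, mul_one]
    calc (∑ c, ∑ d, ∑ r, fluPr fC fT fF fD fR c t d r)
        = ∑ c, fC c * fT t := Finset.sum_congr rfl fun c _ => h1 c
      _ = fT t := by rw [← Finset.sum_mul, hC.2, one_mul]
  -- termwise
  unfold fluInt
  refine Finset.sum_congr rfl fun t _ => ?_
  obtain ⟨φ₀, hφ1, hφ2⟩ := one_hot (fF (c₀, t)) (cfd t) (hF.2 (c₀, t))
  have hnum : fluPr fC fT fF fD fR c₀ t d₀ r₀
      = fC c₀ * fT t * fD φ₀ d₀ * fR (φ₀, d₀) r₀ := by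
    unfold fluPr
    rw [Finset.sum_eq_single φ₀]
    · rw [hφ1, mul_one]
    · intro φ _ hne; rw [hφ2 φ hne]; ring
    · intro h; exact absurd (Finset.mem_univ φ₀) h
  have hden : (∑ r, fluPr fC fT fF fD fR c₀ t d₀ r)
      = fC c₀ * fT t * fD φ₀ d₀ := by
    rw [hsumr c₀ t d₀, Finset.sum_eq_single φ₀]
    · rw [hφ1, mul_one]
    · intro φ _ hne; rw [hφ2 φ hne]; ring
    · intro h; exact absurd (Finset.mem_univ φ₀) h
  have hA : fC c₀ * fT t * fD φ₀ d₀ ≠ 0 := by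
    have := hpos t
    rw [hden] at this
    exact ne_of_gt this
  have hLHS : (∑ φ, fT t * fF (c₀, t) φ * fR (φ, d₀) r₀)
      = fT t * fR (φ₀, d₀) r₀ := by
    rw [Finset.sum_eq_single φ₀]
    · rw [hφ1, mul_one]
    · intro φ _ hne; rw [hφ2 φ hne]; ring
    · intro h; exact absurd (Finset.mem_univ φ₀) h
  rw [hLHS, hmarg t, hnum, hden, mul_comm (fC c₀ * fT t * fD φ₀ d₀) (fR (φ₀, d₀) r₀),
    mul_div_assoc, div_self hA, mul_one]
end

section
/- (Proposition 4, unidentifiability half.) There exist finite state spaces for the variables (one may take C, T, D, R binary and F with four states, with c₀ one of C's two states) and two models, i.e., two tuples of stochastic CPTs (f¹_C, f¹_T, f¹_F, f¹_D, f¹_R) and (f²_C, f²_T, f²_F, f²_D, f²_R), both satisfying the conditional functional dependency [T, C=c₀] → F (for every t, f_F(·|c₀,t) takes values in {0,1}), such that the induced observational distributions are equal and strictly positive, Pr¹(c,t,d,r) = Pr²(c,t,d,r) > 0 for all (c,t,d,r), yet Pr¹_{C=c,D=d}(R=r) ≠ Pr²_{C=c,D=d}(R=r) for some states c, d, r. 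-/
set_option maxHeartbeats 2000000


/-- Auxiliary concrete CPTs -/
noncomputable def myC : Fin 2 → ℝ := fun _ => 1/2
noncomputable def myF1 : Fin 2 × Fin 2 → Fin 4 → ℝ :=
  fun p => ![![0,0,0,1], ![1/2,1/2,0,0]] p.1
noncomputable def myF2 : Fin 2 × Fin 2 → Fin 4 → ℝ :=
  fun p => ![![0,0,0,1], ![0,0,1,0]] p.1
noncomputable def myD : Fin 4 → Fin 2 → ℝ :=
  ![![3/5,2/5], ![2/5,3/5], ![1/2,1/2], ![1/2,1/2]]
noncomputable def myR : Fin 4 × Fin 2 → Fin 2 → ℝ :=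
  fun p => ![![![2/3,1/3],![1/2,1/2]], ![![1/2,1/2],![1/3,2/3]],
             ![![3/5,2/5],![2/5,3/5]], ![![1/2,1/2],![1/2,1/2]]] p.1 p.2


/-- Proposition 4, unidentifiability half: with `C, T, D, R` binary and `F`
with four states, there are two models satisfying the CFD `[T, C=c₀] → F` that
induce the same strictly positive observational distribution but disagree on
some interventional quantity `Pr_{C=c,D=d}(R=r)`. -/
theorem flu_variable_unidentifiable :
    ∃ (c₀ : Fin 2)
      (fC₁ fC₂ fT₁ fT₂ : Fin 2 → ℝ)
      (fF₁ fF₂ : Fin 2 × Fin 2 → Fin 4 → ℝ)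
      (fD₁ fD₂ : Fin 4 → Fin 2 → ℝ)
      (fR₁ fR₂ : Fin 4 × Fin 2 → Fin 2 → ℝ),
      IsDist fC₁ ∧ IsDist fC₂ ∧ IsDist fT₁ ∧ IsDist fT₂ ∧
      IsCPT fF₁ ∧ IsCPT fF₂ ∧ IsCPT fD₁ ∧ IsCPT fD₂ ∧ IsCPT fR₁ ∧ IsCPT fR₂ ∧
      (∀ (t : Fin 2) (φ : Fin 4), fF₁ (c₀, t) φ = 0 ∨ fF₁ (c₀, t) φ = 1) ∧
      (∀ (t : Fin 2) (φ : Fin 4), fF₂ (c₀, t) φ = 0 ∨ fF₂ (c₀, t) φ = 1) ∧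
      (∀ c t d r, fluPr fC₁ fT₁ fF₁ fD₁ fR₁ c t d r
                    = fluPr fC₂ fT₂ fF₂ fD₂ fR₂ c t d r) ∧
      (∀ c t d r, 0 < fluPr fC₁ fT₁ fF₁ fD₁ fR₁ c t d r) ∧
      ∃ c d r, fluInt fT₁ fF₁ fR₁ c d r ≠ fluInt fT₂ fF₂ fR₂ c d r := by
  refine ⟨0, myC, myC, myC, myC, myF1, myF2, myD, myD, myR, myR,
    ⟨?_, ?_⟩, ⟨?_, ?_⟩, ⟨?_, ?_⟩, ⟨?_, ?_⟩, ⟨?_, ?_⟩, ⟨?_, ?_⟩, ⟨?_, ?_⟩,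
    ⟨?_, ?_⟩, ⟨?_, ?_⟩, ⟨?_, ?_⟩, ?_, ?_, ?_, ?_, ⟨1, 0, 0, ?_⟩⟩
  · intro z; fin_cases z <;> norm_num [myC]
  · norm_num [myC, Fin.sum_univ_two]
  · intro z; fin_cases z <;> norm_num [myC]
  · norm_num [myC, Fin.sum_univ_two]
  · intro z; fin_cases z <;> norm_num [myC]
  · norm_num [myC, Fin.sum_univ_two]
  · intro z; fin_cases z <;> norm_num [myC]
  · norm_num [myC, Fin.sum_univ_two]
  · intro p z; obtain ⟨c, t⟩ := p; fin_cases c <;> fin_cases t <;> fin_cases z <;> norm_num [myF1]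
  · intro p; obtain ⟨c, t⟩ := p; fin_cases c <;> fin_cases t <;> norm_num [myF1, Fin.sum_univ_four, Matrix.cons_val_two, Matrix.cons_val_three, Matrix.vecHead, Matrix.vecTail]
  · intro p z; obtain ⟨c, t⟩ := p; fin_cases c <;> fin_cases t <;> fin_cases z <;> norm_num [myF2]
  · intro p; obtain ⟨c, t⟩ := p; fin_cases c <;> fin_cases t <;> norm_num [myF2, Fin.sum_univ_four, Matrix.cons_val_two, Matrix.cons_val_three, Matrix.vecHead, Matrix.vecTail]
  · intro p z; fin_cases p <;> fin_cases z <;> norm_num [myD]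
  · intro p; fin_cases p <;> norm_num [myD, Fin.sum_univ_two]
  · intro p z; fin_cases p <;> fin_cases z <;> norm_num [myD]
  · intro p; fin_cases p <;> norm_num [myD, Fin.sum_univ_two]
  · intro p z; obtain ⟨φ, d⟩ := p; fin_cases φ <;> fin_cases d <;> fin_cases z <;> norm_num [myR]
  · intro p; obtain ⟨φ, d⟩ := p; fin_cases φ <;> fin_cases d <;> norm_num [myR, Fin.sum_univ_two]
  · intro p z; obtain ⟨φ, d⟩ := p; fin_cases φ <;> fin_cases d <;> fin_cases z <;> norm_num [myR]
  · intro p; obtain ⟨φ, d⟩ := p; fin_cases φ <;> fin_cases d <;> norm_num [myR, Fin.sum_univ_two]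
  · intro t φ; fin_cases t <;> fin_cases φ <;> norm_num [myF1]
  · intro t φ; fin_cases t <;> fin_cases φ <;> norm_num [myF2]
  · intro c t d r; fin_cases c <;> fin_cases t <;> fin_cases d <;> fin_cases r <;>
      norm_num [fluPr, Fin.sum_univ_four, myC, myF1, myF2, myD, myR, Matrix.cons_val_zero, Matrix.cons_val_one, Matrix.head_cons, Matrix.cons_val_fin_one, Matrix.cons_val_two, Matrix.cons_val_three, Matrix.vecHead, Matrix.vecTail]
  · intro c t d r; fin_cases c <;> fin_cases t <;> fin_cases d <;> fin_cases r <;>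
      norm_num [fluPr, Fin.sum_univ_four, myC, myF1, myD, myR, Matrix.vecHead, Matrix.vecTail, Matrix.cons_val_zero, Matrix.cons_val_one, Matrix.head_cons, Matrix.cons_val_fin_one, Matrix.cons_val_two, Matrix.cons_val_three]
  · norm_num [fluInt, Fin.sum_univ_two, Fin.sum_univ_four, myC, myF1, myF2, myR, Matrix.cons_val_two, Matrix.cons_val_three, Matrix.vecHead, Matrix.vecTail]
end

section
/- (Proposition 6, identifiability half.) Let A be binary with states {a₀, a₁}. Assume the CSI constraints: f_X(x|u,a₀) = f_X(x|u',a₀) for all x,u,u', and f_Y(y|u,x,a₁) = f_Y(y|u',x,a₁) for all y,x,u,u'. Fix a state x of X and assume Pr(X=x, A=a₀) > 0 and Pr(X=x, A=a₁) > 0, where Pr(X=x,A=a) = ∑_y Pr(a,x,y). Then for every y, Pr_{X=x}(Y=y) = Pr(A=a₀) · Pr(y|x,a₀) + Pr(A=a₁) · Pr(y|x,a₁), where Pr(A=a) = ∑_{x',y} Pr(a,x',y) and Pr(y|x,a) = Pr(a,x,y) / Pr(X=x,A=a). -/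
/-- Observational distribution of the flight graph:
`Pr(a,x,y) = ∑_u f_U(u) f_A(a) f_X(x|u,a) f_Y(y|u,x,a)`. -/
noncomputable def flightPr {U A X Y : Type*} [Fintype U]
    (fU : U → ℝ) (fA : A → ℝ) (fX : U × A → X → ℝ) (fY : U × X × A → Y → ℝ)
    (a : A) (x : X) (y : Y) : ℝ :=
  ∑ u, fU u * fA a * fX (u, a) x * fY (u, x, a) y

/-- Interventional quantity of the flight graph (intervening `X = x`):
`Pr_{X=x}(Y=y) = ∑_{u,a} f_U(u) f_A(a) f_Y(y|u,x,a)`. -/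
noncomputable def flightInt {U A X Y : Type*} [Fintype U] [Fintype A]
    (fU : U → ℝ) (fA : A → ℝ) (fY : U × X × A → Y → ℝ) (x : X) (y : Y) : ℝ :=
  ∑ u, ∑ a, fU u * fA a * fY (u, x, a) y

/-- Proposition 6, identifiability half: with `A` binary with states `{a₀,a₁}`
and the CSI constraints `(X ⟂ U | A=a₀)` and `(Y ⟂ U | X, A=a₁)`,
`Pr_{X=x}(Y=y) = Pr(A=a₀)·Pr(y|x,a₀) + Pr(A=a₁)·Pr(y|x,a₁)`. -/
theorem flight_identifiable
    {U A X Y : Type*} [Fintype U] [Fintype A] [Fintype X] [Fintype Y]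
    [Nonempty U] [Nonempty A] [Nonempty X] [Nonempty Y]
    (fU : U → ℝ) (fA : A → ℝ) (fX : U × A → X → ℝ) (fY : U × X × A → Y → ℝ)
    (hU : IsDist fU) (hA : IsDist fA) (hX : IsCPT fX) (hY : IsCPT fY)
    (a₀ a₁ : A) (hne : a₀ ≠ a₁) (hbin : ∀ a : A, a = a₀ ∨ a = a₁)
    (csi₀ : ∀ (x : X) (u u' : U), fX (u, a₀) x = fX (u', a₀) x)
    (csi₁ : ∀ (y : Y) (x : X) (u u' : U), fY (u, x, a₁) y = fY (u', x, a₁) y)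
    (x : X)
    (hpos₀ : 0 < ∑ y, flightPr fU fA fX fY a₀ x y)
    (hpos₁ : 0 < ∑ y, flightPr fU fA fX fY a₁ x y) :
    ∀ y : Y,
      flightInt fU fA fY x y
        = (∑ x', ∑ y', flightPr fU fA fX fY a₀ x' y')
            * (flightPr fU fA fX fY a₀ x y / ∑ y', flightPr fU fA fX fY a₀ x y')
          + (∑ x', ∑ y', flightPr fU fA fX fY a₁ x' y')
            * (flightPr fU fA fX fY a₁ x y / ∑ y', flightPr fU fA fX fY a₁ x y') := by
  classical
  obtain ⟨u₀⟩ := (inferInstance : Nonempty U)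
  -- abbreviations
  set d : ℝ := fX (u₀, a₀) x with hd
  set s : ℝ := ∑ u, fU u * fX (u, a₁) x with hs
  set c : Y → ℝ := fun y => fY (u₀, x, a₁) y with hc
  set T : Y → ℝ := fun y => ∑ u, fU u * fY (u, x, a₀) y with hT
  have sumA : ∀ g : A → ℝ, ∑ a, g a = g a₀ + g a₁ := by
    intro g
    have huniv : (Finset.univ : Finset A) = {a₀, a₁} := by
      ext a
      simp only [Finset.mem_univ, Finset.mem_insert, Finset.mem_singleton, true_iff]
      exact hbin a
    rw [huniv, Finset.sum_pair hne]
  -- marginal of A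
  have margA : ∀ a : A, ∑ x', ∑ y', flightPr fU fA fX fY a x' y' = fA a := by
    intro a
    have h1 : ∀ x' : X, ∑ y', flightPr fU fA fX fY a x' y'
        = ∑ u, fU u * fA a * fX (u, a) x' := by
      intro x'
      simp only [flightPr]
      rw [Finset.sum_comm]
      refine Finset.sum_congr rfl fun u _ => ?_
      rw [← Finset.mul_sum, hY.2, mul_one]
    calc ∑ x', ∑ y', flightPr fU fA fX fY a x' y'
        = ∑ x', ∑ u, fU u * fA a * fX (u, a) x' := by
          exact Finset.sum_congr rfl fun x' _ => h1 x'
      _ = ∑ u, ∑ x', fU u * fA a * fX (u, a) x' := Finset.sum_comm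
      _ = ∑ u, fU u * fA a := by
          refine Finset.sum_congr rfl fun u _ => ?_
          rw [← Finset.mul_sum, hX.2, mul_one]
      _ = fA a := by rw [← Finset.sum_mul, hU.2, one_mul]
  -- Pr(a₀, x, y) = fA a₀ * d * T y
  have pr0 : ∀ y : Y, flightPr fU fA fX fY a₀ x y = (fA a₀ * d) * T y := by
    intro y
    simp only [flightPr, hT]
    rw [Finset.mul_sum]
    refine Finset.sum_congr rfl fun u _ => ?_
    rw [csi₀ x u u₀]
    ring
  -- Pr(a₁, x, y) = (fA a₁ * s) * c y
  have pr1 : ∀ y : Y, flightPr fU fA fX fY a₁ x y = (fA a₁ * s) * c y := by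
    intro y
    simp only [flightPr, hc, hs]
    rw [mul_assoc, Finset.sum_mul, Finset.mul_sum]
    refine Finset.sum_congr rfl fun u _ => ?_
    rw [csi₁ y x u u₀]
    ring
  have sumT : ∑ y, T y = 1 := by
    simp only [hT]
    rw [Finset.sum_comm]
    calc ∑ u, ∑ y, fU u * fY (u, x, a₀) y = ∑ u, fU u := by
          refine Finset.sum_congr rfl fun u _ => ?_
          rw [← Finset.mul_sum, hY.2, mul_one]
      _ = 1 := hU.2
  have sumc : ∑ y, c y = 1 := hY.2 (u₀, x, a₁)
  have marg0 : ∑ y, flightPr fU fA fX fY a₀ x y = fA a₀ * d := by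
    simp only [pr0]
    rw [← Finset.mul_sum, sumT, mul_one]
  have marg1 : ∑ y, flightPr fU fA fX fY a₁ x y = fA a₁ * s := by
    simp only [pr1]
    rw [← Finset.mul_sum, sumc, mul_one]
  have h0ne : fA a₀ * d ≠ 0 := by
    rw [marg0] at hpos₀; exact ne_of_gt hpos₀
  have h1ne : fA a₁ * s ≠ 0 := by
    rw [marg1] at hpos₁; exact ne_of_gt hpos₁
  intro y
  have hint : flightInt fU fA fY x y = fA a₀ * T y + fA a₁ * c y := by
    simp only [flightInt, hT, hc]
    rw [Finset.mul_sum]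
    rw [show ∑ u, ∑ a, fU u * fA a * fY (u, x, a) y
        = ∑ u, (fU u * fA a₀ * fY (u, x, a₀) y + fU u * fA a₁ * fY (u, x, a₁) y) from
      Finset.sum_congr rfl fun u _ => sumA _]
    rw [Finset.sum_add_distrib]
    congr 1
    · refine Finset.sum_congr rfl fun u _ => ?_; ring
    · calc ∑ u, fU u * fA a₁ * fY (u, x, a₁) y
          = ∑ u, fU u * (fA a₁ * fY (u₀, x, a₁) y) := by
            refine Finset.sum_congr rfl fun u _ => ?_
            rw [csi₁ y x u u₀]; ring
        _ = fA a₁ * fY (u₀, x, a₁) y := by rw [← Finset.sum_mul, hU.2, one_mul]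
  rw [hint, margA a₀, margA a₁, marg0, marg1, pr0 y, pr1 y,
    mul_div_cancel_left₀ _ h0ne, mul_div_cancel_left₀ _ h1ne]
end

section
/- (Proposition 6, unidentifiability half.) There exist finite state spaces for the variables (one may take U, X, Y binary and A with three states, with a₀ ≠ a₁ two of A's states) and two models, i.e., two tuples of stochastic CPTs (f¹_U, f¹_A, f¹_X, f¹_Y) and (f²_U, f²_A, f²_X, f²_Y), both satisfying the CSI constraints f_X(x|u,a₀) independent of u and f_Y(y|u,x,a₁) independent of u, such that the induced observational distributions are equal and strictly positive, Pr¹(a,x,y) = Pr²(a,x,y) > 0 for all (a,x,y), yet Pr¹_{X=x}(Y=y) ≠ Pr²_{X=x}(Y=y) for every pair of states x, y. -/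
/-- Proposition 6, unidentifiability half: with `U, X, Y` binary and `A` with
three states, there are two models satisfying the CSI constraints
`(X ⟂ U | A=a₀)` and `(Y ⟂ U | X, A=a₁)` that induce the same strictly positive
observational distribution but disagree on `Pr_{X=x}(Y=y)` for every `x, y`. -/
theorem flight_variable_unidentifiable :
    ∃ (a₀ a₁ : Fin 3), a₀ ≠ a₁ ∧
    ∃ (fU₁ fU₂ : Fin 2 → ℝ) (fA₁ fA₂ : Fin 3 → ℝ)
      (fX₁ fX₂ : Fin 2 × Fin 3 → Fin 2 → ℝ)
      (fY₁ fY₂ : Fin 2 × Fin 2 × Fin 3 → Fin 2 → ℝ),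
      IsDist fU₁ ∧ IsDist fU₂ ∧ IsDist fA₁ ∧ IsDist fA₂ ∧
      IsCPT fX₁ ∧ IsCPT fX₂ ∧ IsCPT fY₁ ∧ IsCPT fY₂ ∧
      (∀ (x : Fin 2) (u u' : Fin 2), fX₁ (u, a₀) x = fX₁ (u', a₀) x) ∧
      (∀ (x : Fin 2) (u u' : Fin 2), fX₂ (u, a₀) x = fX₂ (u', a₀) x) ∧
      (∀ (y x : Fin 2) (u u' : Fin 2), fY₁ (u, x, a₁) y = fY₁ (u', x, a₁) y) ∧
      (∀ (y x : Fin 2) (u u' : Fin 2), fY₂ (u, x, a₁) y = fY₂ (u', x, a₁) y) ∧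
      (∀ a x y, flightPr fU₁ fA₁ fX₁ fY₁ a x y = flightPr fU₂ fA₂ fX₂ fY₂ a x y) ∧
      (∀ a x y, 0 < flightPr fU₁ fA₁ fX₁ fY₁ a x y) ∧
      (∀ x y, flightInt fU₁ fA₁ fY₁ x y ≠ flightInt fU₂ fA₂ fY₂ x y) := by
  refine ⟨0, 1, by decide,
    (fun _ => 1/2), (fun _ => 1/2), (fun _ => 1/3), (fun _ => 1/3),
    (fun _ _ => 1/2),
    (fun p x => if p.2 = 0 then 1/2 else if p.1 = x then 1/4 else 3/4),
    (fun p y => if p.2.2 = 2 then (if p.2.1 = y then 5/8 else 3/8) else 1/2),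
    (fun p y => if p.2.2 = 1 then 1/2 else if p.1 = y then 1/4 else 3/4),
    ?_, ?_, ?_, ?_, ?_, ?_, ?_, ?_, ?_, ?_, ?_, ?_, ?_, ?_, ?_⟩
  · exact ⟨fun _ => by norm_num, by norm_num [Fin.sum_univ_two]⟩
  · exact ⟨fun _ => by norm_num, by norm_num [Fin.sum_univ_two]⟩
  · exact ⟨fun _ => by norm_num, by norm_num [Fin.sum_univ_three]⟩
  · exact ⟨fun _ => by norm_num, by norm_num [Fin.sum_univ_three]⟩
  · exact ⟨fun _ _ => by norm_num, fun _ => by norm_num [Fin.sum_univ_two]⟩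
  · refine ⟨fun p x => by dsimp only; split_ifs <;> norm_num, fun p => ?_⟩
    obtain ⟨u, a⟩ := p
    fin_cases u <;> fin_cases a <;> simp [Fin.sum_univ_two] <;> norm_num
  · refine ⟨fun p y => by dsimp only; split_ifs <;> norm_num, fun p => ?_⟩
    obtain ⟨u, x, a⟩ := p
    fin_cases u <;> fin_cases x <;> fin_cases a <;> simp [Fin.sum_univ_two] <;> norm_num
  · refine ⟨fun p y => by dsimp only; split_ifs <;> norm_num, fun p => ?_⟩
    obtain ⟨u, x, a⟩ := p
    fin_cases u <;> fin_cases x <;> fin_cases a <;> simp [Fin.sum_univ_two] <;> norm_num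
  · intro x u u'; rfl
  · intro x u u'; simp
  · intro y x u u'; simp
  · intro y x u u'; simp
  · intro a x y
    fin_cases a <;> fin_cases x <;> fin_cases y <;>
      simp [flightPr, Fin.sum_univ_two] <;> norm_num
  · intro a x y
    fin_cases a <;> fin_cases x <;> fin_cases y <;>
      simp [flightPr, Fin.sum_univ_two] <;> norm_num
  · intro x y
    fin_cases x <;> fin_cases y <;>
      simp [flightInt, Fin.sum_univ_two, Fin.sum_univ_three] <;> norm_num
end

section
/- (Proposition 7, state-based identifiability half.) Let B be binary with states {b₀, b₁} and fix a state x₀ of X. Assume the CSI constraints: f_A(a|u₁,u₂,x₀) is independent of u₁; f_Y(y|u₂,u₃,a,b₀) is independent of u₃; and f_Y(y|u₂,u₃,a,b₁) is independent of a. If the observational distribution is strictly positive (Pr(x,a,b,y) > 0 for all instantiations), then for every y, Pr_{X=x₀}(Y=y) = Pr(B=b₀) · ( ∑_{a} Pr(A=a | X=x₀) · Pr(Y=y | A=a, B=b₀, X=x₀) ) + Pr(Y=y, B=b₁), where all marginal and conditional probabilities on the right-hand side are computed from the observational distribution Pr (conditionals as ratios). -/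
private lemma sum_binary' {B : Type*} [Fintype B] {b₀ b₁ : B} (hne : b₀ ≠ b₁)
    (hbin : ∀ b : B, b = b₀ ∨ b = b₁) (F : B → ℝ) : ∑ b, F b = F b₀ + F b₁ := by
  classical
  have h : (Finset.univ : Finset B) = {b₀, b₁} := by
    ext b; simpa using hbin b
  rw [h, Finset.sum_pair hne]
private lemma sum_collapse3' {ι ι₁ ι₂ ι₃ : Type*} [Fintype ι] [Fintype ι₁] [Fintype ι₂] [Fintype ι₃]
    (C : ι₁ → ι₂ → ι₃ → ℝ) (f : ι₁ → ι₂ → ι₃ → ι → ℝ)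
    (hf : ∀ u₁ u₂ u₃, ∑ z, f u₁ u₂ u₃ z = 1) :
    ∑ z, ∑ u₁, ∑ u₂, ∑ u₃, C u₁ u₂ u₃ * f u₁ u₂ u₃ z = ∑ u₁, ∑ u₂, ∑ u₃, C u₁ u₂ u₃ := by
  rw [Finset.sum_comm]
  refine Finset.sum_congr rfl fun u₁ _ => ?_
  rw [Finset.sum_comm]
  refine Finset.sum_congr rfl fun u₂ _ => ?_
  rw [Finset.sum_comm]
  refine Finset.sum_congr rfl fun u₃ _ => ?_
  rw [← Finset.mul_sum, hf, mul_one]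

private lemma facL1 {ι₁ ι₂ ι₃ : Type*} [Fintype ι₁] [Fintype ι₂] [Fintype ι₃]
    (p : ι₁ → ι₃ → ℝ) (q : ι₂ → ℝ) (c : ℝ) :
    ∑ i, ∑ j, ∑ k, p i k * q j * c = c * ((∑ i, ∑ k, p i k) * (∑ j, q j)) := by
  simp only [Finset.sum_mul, Finset.mul_sum]
  rw [Finset.sum_comm]
  exact Finset.sum_congr rfl fun j _ => Finset.sum_congr rfl fun i _ =>
    Finset.sum_congr rfl fun k _ => by ring

private lemma facL2 {ι₁ ι₂ ι₃ : Type*} [Fintype ι₁] [Fintype ι₂] [Fintype ι₃]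
    (p : ι₁ → ℝ) (q : ι₂ → ι₃ → ℝ) (c : ℝ) (hp : ∑ i, p i = 1) :
    ∑ i, ∑ j, ∑ k, p i * q j k * c = c * (∑ j, ∑ k, q j k) := by
  have inner : ∀ i, ∑ j, ∑ k, p i * q j k * c = p i * (c * ∑ j, ∑ k, q j k) := by
    intro i
    calc ∑ j, ∑ k, p i * q j k * c
        = ∑ j, ∑ k, (p i * c) * q j k :=
          Finset.sum_congr rfl fun j _ => Finset.sum_congr rfl fun k _ => by ring
      _ = ∑ j, (p i * c) * ∑ k, q j k :=
          Finset.sum_congr rfl fun j _ => (Finset.mul_sum _ _ _).symm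
      _ = (p i * c) * ∑ j, ∑ k, q j k := (Finset.mul_sum _ _ _).symm
      _ = p i * (c * ∑ j, ∑ k, q j k) := by ring
  calc ∑ i, ∑ j, ∑ k, p i * q j k * c
      = ∑ i, p i * (c * ∑ j, ∑ k, q j k) := Finset.sum_congr rfl fun i _ => inner i
    _ = (∑ i, p i) * (c * ∑ j, ∑ k, q j k) := (Finset.sum_mul _ _ _).symm
    _ = c * (∑ j, ∑ k, q j k) := by rw [hp, one_mul]

private lemma facL3 {ι₁ ι₂ ι₃ : Type*} [Fintype ι₁] [Fintype ι₂] [Fintype ι₃]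
    (p : ι₁ → ℝ) (q : ι₂ → ℝ) (r : ι₃ → ℝ) (c : ℝ)
    (hp : ∑ i, p i = 1) (hq : ∑ j, q j = 1) (hr : ∑ k, r k = 1) :
    ∑ i, ∑ j, ∑ k, p i * q j * r k * c = c := by
  have hk : ∀ i j, ∑ k, p i * q j * r k * c = p i * q j * c := by
    intro i j
    calc ∑ k, p i * q j * r k * c = ∑ k, (p i * q j * c) * r k :=
          Finset.sum_congr rfl fun k _ => by ring
      _ = (p i * q j * c) * ∑ k, r k := (Finset.mul_sum _ _ _).symm
      _ = p i * q j * c := by rw [hr, mul_one]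
  have hj : ∀ i, ∑ j, p i * q j * c = p i * c := by
    intro i
    calc ∑ j, p i * q j * c = ∑ j, (p i * c) * q j :=
          Finset.sum_congr rfl fun j _ => by ring
      _ = (p i * c) * ∑ j, q j := (Finset.mul_sum _ _ _).symm
      _ = p i * c := by rw [hq, mul_one]
  calc ∑ i, ∑ j, ∑ k, p i * q j * r k * c
      = ∑ i, ∑ j, p i * q j * c :=
        Finset.sum_congr rfl fun i _ => Finset.sum_congr rfl fun j _ => hk i j
    _ = ∑ i, p i * c := Finset.sum_congr rfl fun i _ => hj i
    _ = (∑ i, p i) * c := (Finset.sum_mul _ _ _).symm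
    _ = c := by rw [hp, one_mul]

private lemma facL4 {ι₁ ι₂ ι₃ κ : Type*} [Fintype ι₁] [Fintype ι₂] [Fintype ι₃] [Fintype κ]
    (p : ι₁ → ℝ) (q : ι₂ → κ → ℝ) (r : ι₃ → ℝ) (c : ℝ)
    (hp : ∑ i, p i = 1) (hr : ∑ k, r k = 1) :
    ∑ i, ∑ j, ∑ k, ∑ l, p i * q j l * r k * c = c * ∑ l, ∑ j, q j l := by
  have hkl : ∀ i j, ∑ k, ∑ l, p i * q j l * r k * c = (p i * c) * ∑ l, q j l := by
    intro i j
    calc ∑ k, ∑ l, p i * q j l * r k * c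
        = ∑ k, (∑ l, (p i * c) * q j l) * r k := by
          refine Finset.sum_congr rfl fun k _ => ?_
          calc ∑ l, p i * q j l * r k * c = ∑ l, ((p i * c) * q j l) * r k :=
                Finset.sum_congr rfl fun l _ => by ring
            _ = (∑ l, (p i * c) * q j l) * r k := (Finset.sum_mul _ _ _).symm
      _ = (∑ l, (p i * c) * q j l) * ∑ k, r k := (Finset.mul_sum _ _ _).symm
      _ = ∑ l, (p i * c) * q j l := by rw [hr, mul_one]
      _ = (p i * c) * ∑ l, q j l := (Finset.mul_sum _ _ _).symm
  calc ∑ i, ∑ j, ∑ k, ∑ l, p i * q j l * r k * c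
      = ∑ i, ∑ j, (p i * c) * ∑ l, q j l :=
        Finset.sum_congr rfl fun i _ => Finset.sum_congr rfl fun j _ => hkl i j
    _ = ∑ i, (p i * c) * ∑ j, ∑ l, q j l :=
        Finset.sum_congr rfl fun i _ => (Finset.mul_sum _ _ _).symm
    _ = ∑ i, p i * (c * ∑ j, ∑ l, q j l) :=
        Finset.sum_congr rfl fun i _ => by ring
    _ = (∑ i, p i) * (c * ∑ j, ∑ l, q j l) := (Finset.sum_mul _ _ _).symm
    _ = c * ∑ j, ∑ l, q j l := by rw [hp, one_mul]
    _ = c * ∑ l, ∑ j, q j l := by rw [Finset.sum_comm]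

private lemma facL5 {ι₁ ι₂ ι₃ κ : Type*} [Fintype ι₁] [Fintype ι₂] [Fintype ι₃] [Fintype κ]
    (p : ι₁ → ℝ) (s : ι₂ → ι₃ → ℝ) (q : ι₂ → κ → ℝ) (c : ℝ)
    (hp : ∑ i, p i = 1) (hq : ∀ j, ∑ l, q j l = 1) :
    ∑ i, ∑ j, ∑ k, ∑ l, p i * s j k * q j l * c = c * ∑ j, ∑ k, s j k := by
  have step1 : ∀ i j k, ∑ l, p i * s j k * q j l * c = p i * s j k * c := by
    intro i j k
    calc ∑ l, p i * s j k * q j l * c = ∑ l, (p i * s j k * c) * q j l :=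
          Finset.sum_congr rfl fun l _ => by ring
      _ = (p i * s j k * c) * ∑ l, q j l := (Finset.mul_sum _ _ _).symm
      _ = p i * s j k * c := by rw [hq j, mul_one]
  calc ∑ i, ∑ j, ∑ k, ∑ l, p i * s j k * q j l * c
      = ∑ i, ∑ j, ∑ k, p i * s j k * c :=
        Finset.sum_congr rfl fun i _ => Finset.sum_congr rfl fun j _ =>
          Finset.sum_congr rfl fun k _ => step1 i j k
    _ = c * ∑ j, ∑ k, s j k := facL2 p s c hp


/-- Observational distribution of the detailed flight graph:
`Pr(x,a,b,y) = ∑_{u₁,u₂,u₃} f_{U₁}(u₁) f_{U₂}(u₂) f_{U₃}(u₃) f_X(x|u₁,u₃)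
f_A(a|u₁,u₂,x) f_B(b) f_Y(y|u₂,u₃,a,b)`. -/
noncomputable def dflightPr {U₁ U₂ U₃ X A B Y : Type*}
    [Fintype U₁] [Fintype U₂] [Fintype U₃]
    (fU₁ : U₁ → ℝ) (fU₂ : U₂ → ℝ) (fU₃ : U₃ → ℝ)
    (fX : U₁ × U₃ → X → ℝ) (fA : U₁ × U₂ × X → A → ℝ) (fB : B → ℝ)
    (fY : U₂ × U₃ × A × B → Y → ℝ) (x : X) (a : A) (b : B) (y : Y) : ℝ :=
  ∑ u₁, ∑ u₂, ∑ u₃, fU₁ u₁ * fU₂ u₂ * fU₃ u₃ * fX (u₁, u₃) x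
    * fA (u₁, u₂, x) a * fB b * fY (u₂, u₃, a, b) y

/-- Interventional quantity of the detailed flight graph (intervening `X = x₀`):
`Pr_{X=x₀}(Y=y) = ∑_{u₁,u₂,u₃,a,b} f_{U₁}(u₁) f_{U₂}(u₂) f_{U₃}(u₃)
f_A(a|u₁,u₂,x₀) f_B(b) f_Y(y|u₂,u₃,a,b)`. -/
noncomputable def dflightInt {U₁ U₂ U₃ X A B Y : Type*}
    [Fintype U₁] [Fintype U₂] [Fintype U₃] [Fintype A] [Fintype B]
    (fU₁ : U₁ → ℝ) (fU₂ : U₂ → ℝ) (fU₃ : U₃ → ℝ)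
    (fA : U₁ × U₂ × X → A → ℝ) (fB : B → ℝ)
    (fY : U₂ × U₃ × A × B → Y → ℝ) (x₀ : X) (y : Y) : ℝ :=
  ∑ u₁, ∑ u₂, ∑ u₃, ∑ a, ∑ b, fU₁ u₁ * fU₂ u₂ * fU₃ u₃
    * fA (u₁, u₂, x₀) a * fB b * fY (u₂, u₃, a, b) y

/-- Proposition 7, state-based identifiability half: with `B` binary with
states `{b₀,b₁}`, the CSI constraints, and a strictly positive observational
distribution, `Pr_{X=x₀}(Y=y) = Pr(B=b₀) · ∑_a Pr(A=a|X=x₀) · Pr(Y=y|A=a,B=b₀,X=x₀)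
+ Pr(Y=y,B=b₁)`. -/
theorem dflight_state_identifiable
    {U₁ U₂ U₃ X A B Y : Type*}
    [Fintype U₁] [Fintype U₂] [Fintype U₃] [Fintype X] [Fintype A] [Fintype B] [Fintype Y]
    [Nonempty U₁] [Nonempty U₂] [Nonempty U₃] [Nonempty X] [Nonempty A] [Nonempty B] [Nonempty Y]
    (fU₁ : U₁ → ℝ) (fU₂ : U₂ → ℝ) (fU₃ : U₃ → ℝ)
    (fX : U₁ × U₃ → X → ℝ) (fA : U₁ × U₂ × X → A → ℝ) (fB : B → ℝ)
    (fY : U₂ × U₃ × A × B → Y → ℝ)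
    (hU₁ : IsDist fU₁) (hU₂ : IsDist fU₂) (hU₃ : IsDist fU₃)
    (hX : IsCPT fX) (hA : IsCPT fA) (hB : IsDist fB) (hY : IsCPT fY)
    (b₀ b₁ : B) (hne : b₀ ≠ b₁) (hbin : ∀ b : B, b = b₀ ∨ b = b₁)
    (x₀ : X)
    (csiA : ∀ (a : A) (u₁ u₁' : U₁) (u₂ : U₂),
      fA (u₁, u₂, x₀) a = fA (u₁', u₂, x₀) a)
    (csiY₀ : ∀ (y : Y) (u₂ : U₂) (u₃ u₃' : U₃) (a : A),
      fY (u₂, u₃, a, b₀) y = fY (u₂, u₃', a, b₀) y)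
    (csiY₁ : ∀ (y : Y) (u₂ : U₂) (u₃ : U₃) (a a' : A),
      fY (u₂, u₃, a, b₁) y = fY (u₂, u₃, a', b₁) y)
    (hpos : ∀ x a b y, 0 < dflightPr fU₁ fU₂ fU₃ fX fA fB fY x a b y) :
    ∀ y : Y,
      dflightInt fU₁ fU₂ fU₃ fA fB fY x₀ y
        = (∑ x, ∑ a, ∑ y', dflightPr fU₁ fU₂ fU₃ fX fA fB fY x a b₀ y')
            * (∑ a,
                ((∑ b, ∑ y', dflightPr fU₁ fU₂ fU₃ fX fA fB fY x₀ a b y')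
                  / (∑ a', ∑ b, ∑ y', dflightPr fU₁ fU₂ fU₃ fX fA fB fY x₀ a' b y'))
                * (dflightPr fU₁ fU₂ fU₃ fX fA fB fY x₀ a b₀ y
                  / ∑ y', dflightPr fU₁ fU₂ fU₃ fX fA fB fY x₀ a b₀ y'))
          + (∑ x, ∑ a, dflightPr fU₁ fU₂ fU₃ fX fA fB fY x a b₁ y) := by
  intro y
  classical
  obtain ⟨u₁₀⟩ := (inferInstance : Nonempty U₁)
  obtain ⟨u₃₀⟩ := (inferInstance : Nonempty U₃)
  obtain ⟨a₀⟩ := (inferInstance : Nonempty A)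
  set P : ℝ := ∑ u₁, ∑ u₃, fU₁ u₁ * fU₃ u₃ * fX (u₁, u₃) x₀ with hP
  set α : A → ℝ := fun a => ∑ u₂, fU₂ u₂ * fA (u₁₀, u₂, x₀) a with hα
  set β : A → Y → ℝ :=
    fun a y' => ∑ u₂, fU₂ u₂ * fA (u₁₀, u₂, x₀) a * fY (u₂, u₃₀, a, b₀) y' with hβ
  set γ : ℝ := ∑ u₂, ∑ u₃, fU₂ u₂ * fU₃ u₃ * fY (u₂, u₃, a₀, b₁) y with hγ
  -- collapse the y-sum
  have cY : ∀ x a b, ∑ y', dflightPr fU₁ fU₂ fU₃ fX fA fB fY x a b y'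
      = ∑ u₁, ∑ u₂, ∑ u₃,
          fU₁ u₁ * fU₂ u₂ * fU₃ u₃ * fX (u₁, u₃) x * fA (u₁, u₂, x) a * fB b := by
    intro x a b
    simp only [dflightPr]
    exact sum_collapse3'
      (fun u₁ u₂ u₃ => fU₁ u₁ * fU₂ u₂ * fU₃ u₃ * fX (u₁, u₃) x * fA (u₁, u₂, x) a * fB b)
      (fun _ u₂ u₃ z => fY (u₂, u₃, a, b) z)
      (fun _ u₂ u₃ => hY.2 (u₂, u₃, a, b))
  -- pointwise formula for Pr(x₀, a, b₀, y')
  have c1 : ∀ a y', dflightPr fU₁ fU₂ fU₃ fX fA fB fY x₀ a b₀ y'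
      = fB b₀ * (P * β a y') := by
    intro a y'
    simp only [dflightPr, hP, hβ]
    calc ∑ u₁, ∑ u₂, ∑ u₃, fU₁ u₁ * fU₂ u₂ * fU₃ u₃ * fX (u₁, u₃) x₀
          * fA (u₁, u₂, x₀) a * fB b₀ * fY (u₂, u₃, a, b₀) y'
        = ∑ u₁, ∑ u₂, ∑ u₃, (fU₁ u₁ * fU₃ u₃ * fX (u₁, u₃) x₀)
            * (fU₂ u₂ * fA (u₁₀, u₂, x₀) a * fY (u₂, u₃₀, a, b₀) y') * fB b₀ := by
          refine Finset.sum_congr rfl fun u₁ _ => Finset.sum_congr rfl fun u₂ _ =>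
            Finset.sum_congr rfl fun u₃ _ => ?_
          rw [csiA a u₁ u₁₀ u₂, csiY₀ y' u₂ u₃ u₃₀ a]; ring
      _ = fB b₀ * ((∑ u₁, ∑ u₃, fU₁ u₁ * fU₃ u₃ * fX (u₁, u₃) x₀)
            * (∑ u₂, fU₂ u₂ * fA (u₁₀, u₂, x₀) a * fY (u₂, u₃₀, a, b₀) y')) :=
          facL1 (fun u₁ u₃ => fU₁ u₁ * fU₃ u₃ * fX (u₁, u₃) x₀)
            (fun u₂ => fU₂ u₂ * fA (u₁₀, u₂, x₀) a * fY (u₂, u₃₀, a, b₀) y') (fB b₀)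
  have cβα : ∀ a, ∑ y', β a y' = α a := by
    intro a
    simp only [hβ, hα]
    rw [Finset.sum_comm]
    refine Finset.sum_congr rfl fun u₂ _ => ?_
    rw [← Finset.mul_sum, hY.2 (u₂, u₃₀, a, b₀), mul_one]
  have c2 : ∀ a, ∑ y', dflightPr fU₁ fU₂ fU₃ fX fA fB fY x₀ a b₀ y'
      = fB b₀ * (P * α a) := by
    intro a
    calc ∑ y', dflightPr fU₁ fU₂ fU₃ fX fA fB fY x₀ a b₀ y'
        = ∑ y', fB b₀ * (P * β a y') := Finset.sum_congr rfl fun y' _ => c1 a y'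
      _ = fB b₀ * (P * ∑ y', β a y') := by rw [← Finset.mul_sum, ← Finset.mul_sum]
      _ = fB b₀ * (P * α a) := by rw [cβα a]
  have c3 : ∀ a, ∑ b, ∑ y', dflightPr fU₁ fU₂ fU₃ fX fA fB fY x₀ a b y' = P * α a := by
    intro a
    simp only [hP, hα]
    calc ∑ b, ∑ y', dflightPr fU₁ fU₂ fU₃ fX fA fB fY x₀ a b y'
        = ∑ b, ∑ u₁, ∑ u₂, ∑ u₃, (fU₁ u₁ * fU₂ u₂ * fU₃ u₃ * fX (u₁, u₃) x₀
            * fA (u₁, u₂, x₀) a) * fB b := by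
          refine Finset.sum_congr rfl fun b _ => ?_
          rw [cY x₀ a b]
      _ = ∑ u₁, ∑ u₂, ∑ u₃,
            fU₁ u₁ * fU₂ u₂ * fU₃ u₃ * fX (u₁, u₃) x₀ * fA (u₁, u₂, x₀) a :=
          sum_collapse3'
            (fun u₁ u₂ u₃ => fU₁ u₁ * fU₂ u₂ * fU₃ u₃ * fX (u₁, u₃) x₀ * fA (u₁, u₂, x₀) a)
            (fun _ _ _ b => fB b) (fun _ _ _ => hB.2)
      _ = ∑ u₁, ∑ u₂, ∑ u₃, (fU₁ u₁ * fU₃ u₃ * fX (u₁, u₃) x₀)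
            * (fU₂ u₂ * fA (u₁₀, u₂, x₀) a) * 1 := by
          refine Finset.sum_congr rfl fun u₁ _ => Finset.sum_congr rfl fun u₂ _ =>
            Finset.sum_congr rfl fun u₃ _ => ?_
          rw [csiA a u₁ u₁₀ u₂]; ring
      _ = 1 * ((∑ u₁, ∑ u₃, fU₁ u₁ * fU₃ u₃ * fX (u₁, u₃) x₀)
            * (∑ u₂, fU₂ u₂ * fA (u₁₀, u₂, x₀) a)) :=
          facL1 (fun u₁ u₃ => fU₁ u₁ * fU₃ u₃ * fX (u₁, u₃) x₀)
            (fun u₂ => fU₂ u₂ * fA (u₁₀, u₂, x₀) a) 1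
      _ = (∑ u₁, ∑ u₃, fU₁ u₁ * fU₃ u₃ * fX (u₁, u₃) x₀)
            * (∑ u₂, fU₂ u₂ * fA (u₁₀, u₂, x₀) a) := by rw [one_mul]
  have c4 : ∑ a, α a = 1 := by
    simp only [hα]
    rw [Finset.sum_comm]
    calc ∑ u₂, ∑ a, fU₂ u₂ * fA (u₁₀, u₂, x₀) a
        = ∑ u₂, fU₂ u₂ := Finset.sum_congr rfl fun u₂ _ => by
            rw [← Finset.mul_sum, hA.2 (u₁₀, u₂, x₀), mul_one]
      _ = 1 := hU₂.2
  have c5 : ∑ a', ∑ b, ∑ y', dflightPr fU₁ fU₂ fU₃ fX fA fB fY x₀ a' b y' = P := by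
    calc ∑ a', ∑ b, ∑ y', dflightPr fU₁ fU₂ fU₃ fX fA fB fY x₀ a' b y'
        = ∑ a', P * α a' := Finset.sum_congr rfl fun a _ => c3 a
      _ = P * ∑ a', α a' := by rw [← Finset.mul_sum]
      _ = P := by rw [c4, mul_one]
  have c6 : ∑ x, ∑ a, ∑ y', dflightPr fU₁ fU₂ fU₃ fX fA fB fY x a b₀ y' = fB b₀ := by
    calc ∑ x, ∑ a, ∑ y', dflightPr fU₁ fU₂ fU₃ fX fA fB fY x a b₀ y'
        = ∑ x, ∑ a, ∑ u₁, ∑ u₂, ∑ u₃, (fU₁ u₁ * fU₂ u₂ * fU₃ u₃ * fX (u₁, u₃) x * fB b₀)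
            * fA (u₁, u₂, x) a := by
          refine Finset.sum_congr rfl fun x _ => Finset.sum_congr rfl fun a _ => ?_
          rw [cY x a b₀]
          exact Finset.sum_congr rfl fun u₁ _ => Finset.sum_congr rfl fun u₂ _ =>
            Finset.sum_congr rfl fun u₃ _ => by ring
      _ = ∑ x, ∑ u₁, ∑ u₂, ∑ u₃, fU₁ u₁ * fU₂ u₂ * fU₃ u₃ * fX (u₁, u₃) x * fB b₀ := by
          refine Finset.sum_congr rfl fun x _ => ?_
          exact sum_collapse3'
            (fun u₁ u₂ u₃ => fU₁ u₁ * fU₂ u₂ * fU₃ u₃ * fX (u₁, u₃) x * fB b₀)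
            (fun u₁ u₂ _ a => fA (u₁, u₂, x) a) (fun u₁ u₂ _ => hA.2 (u₁, u₂, x))
      _ = ∑ x, ∑ u₁, ∑ u₂, ∑ u₃, (fU₁ u₁ * fU₂ u₂ * fU₃ u₃ * fB b₀) * fX (u₁, u₃) x := by
          refine Finset.sum_congr rfl fun x _ => Finset.sum_congr rfl fun u₁ _ =>
            Finset.sum_congr rfl fun u₂ _ => Finset.sum_congr rfl fun u₃ _ => by ring
      _ = ∑ u₁, ∑ u₂, ∑ u₃, fU₁ u₁ * fU₂ u₂ * fU₃ u₃ * fB b₀ :=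
          sum_collapse3' (fun u₁ u₂ u₃ => fU₁ u₁ * fU₂ u₂ * fU₃ u₃ * fB b₀)
            (fun u₁ _ u₃ x => fX (u₁, u₃) x) (fun u₁ _ u₃ => hX.2 (u₁, u₃))
      _ = fB b₀ := facL3 fU₁ fU₂ fU₃ (fB b₀) hU₁.2 hU₂.2 hU₃.2
  have c7 : ∑ x, ∑ a, dflightPr fU₁ fU₂ fU₃ fX fA fB fY x a b₁ y = fB b₁ * γ := by
    simp only [hγ]
    calc ∑ x, ∑ a, dflightPr fU₁ fU₂ fU₃ fX fA fB fY x a b₁ y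
        = ∑ x, ∑ a, ∑ u₁, ∑ u₂, ∑ u₃, (fU₁ u₁ * fU₂ u₂ * fU₃ u₃ * fX (u₁, u₃) x * fB b₁
            * fY (u₂, u₃, a₀, b₁) y) * fA (u₁, u₂, x) a := by
          refine Finset.sum_congr rfl fun x _ => Finset.sum_congr rfl fun a _ => ?_
          simp only [dflightPr]
          refine Finset.sum_congr rfl fun u₁ _ => Finset.sum_congr rfl fun u₂ _ =>
            Finset.sum_congr rfl fun u₃ _ => ?_
          rw [csiY₁ y u₂ u₃ a a₀]; ring
      _ = ∑ x, ∑ u₁, ∑ u₂, ∑ u₃, fU₁ u₁ * fU₂ u₂ * fU₃ u₃ * fX (u₁, u₃) x * fB b₁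
            * fY (u₂, u₃, a₀, b₁) y := by
          refine Finset.sum_congr rfl fun x _ => ?_
          exact sum_collapse3'
            (fun u₁ u₂ u₃ => fU₁ u₁ * fU₂ u₂ * fU₃ u₃ * fX (u₁, u₃) x * fB b₁
              * fY (u₂, u₃, a₀, b₁) y)
            (fun u₁ u₂ _ a => fA (u₁, u₂, x) a) (fun u₁ u₂ _ => hA.2 (u₁, u₂, x))
      _ = ∑ x, ∑ u₁, ∑ u₂, ∑ u₃, (fU₁ u₁ * fU₂ u₂ * fU₃ u₃ * fB b₁
            * fY (u₂, u₃, a₀, b₁) y) * fX (u₁, u₃) x := by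
          refine Finset.sum_congr rfl fun x _ => Finset.sum_congr rfl fun u₁ _ =>
            Finset.sum_congr rfl fun u₂ _ => Finset.sum_congr rfl fun u₃ _ => by ring
      _ = ∑ u₁, ∑ u₂, ∑ u₃, fU₁ u₁ * fU₂ u₂ * fU₃ u₃ * fB b₁ * fY (u₂, u₃, a₀, b₁) y :=
          sum_collapse3'
            (fun u₁ u₂ u₃ => fU₁ u₁ * fU₂ u₂ * fU₃ u₃ * fB b₁ * fY (u₂, u₃, a₀, b₁) y)
            (fun u₁ _ u₃ x => fX (u₁, u₃) x) (fun u₁ _ u₃ => hX.2 (u₁, u₃))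
      _ = ∑ u₁, ∑ u₂, ∑ u₃, fU₁ u₁ * (fU₂ u₂ * fU₃ u₃ * fY (u₂, u₃, a₀, b₁) y) * fB b₁ := by
          refine Finset.sum_congr rfl fun u₁ _ => Finset.sum_congr rfl fun u₂ _ =>
            Finset.sum_congr rfl fun u₃ _ => by ring
      _ = fB b₁ * ∑ u₂, ∑ u₃, fU₂ u₂ * fU₃ u₃ * fY (u₂, u₃, a₀, b₁) y :=
          facL2 fU₁ (fun u₂ u₃ => fU₂ u₂ * fU₃ u₃ * fY (u₂, u₃, a₀, b₁) y) (fB b₁) hU₁.2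
  have c8 : dflightInt fU₁ fU₂ fU₃ fA fB fY x₀ y = fB b₀ * (∑ a, β a y) + fB b₁ * γ := by
    simp only [dflightInt, hβ, hγ]
    calc ∑ u₁, ∑ u₂, ∑ u₃, ∑ a, ∑ b, fU₁ u₁ * fU₂ u₂ * fU₃ u₃
          * fA (u₁, u₂, x₀) a * fB b * fY (u₂, u₃, a, b) y
        = ∑ u₁, ∑ u₂, ∑ u₃, ∑ a,
            (fU₁ u₁ * (fU₂ u₂ * fA (u₁₀, u₂, x₀) a * fY (u₂, u₃₀, a, b₀) y) * fU₃ u₃ * fB b₀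
             + fU₁ u₁ * (fU₂ u₂ * fU₃ u₃ * fY (u₂, u₃, a₀, b₁) y)
                * fA (u₁₀, u₂, x₀) a * fB b₁) := by
          refine Finset.sum_congr rfl fun u₁ _ => Finset.sum_congr rfl fun u₂ _ =>
            Finset.sum_congr rfl fun u₃ _ => Finset.sum_congr rfl fun a _ => ?_
          have hb2 : ∑ b, fU₁ u₁ * fU₂ u₂ * fU₃ u₃ * fA (u₁, u₂, x₀) a * fB b
                * fY (u₂, u₃, a, b) y
              = fU₁ u₁ * fU₂ u₂ * fU₃ u₃ * fA (u₁, u₂, x₀) a * fB b₀ * fY (u₂, u₃, a, b₀) y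
              + fU₁ u₁ * fU₂ u₂ * fU₃ u₃ * fA (u₁, u₂, x₀) a * fB b₁
                * fY (u₂, u₃, a, b₁) y :=
            sum_binary' hne hbin _
          rw [hb2, csiA a u₁ u₁₀ u₂, csiY₀ y u₂ u₃ u₃₀ a, csiY₁ y u₂ u₃ a a₀]; ring
      _ = (∑ u₁, ∑ u₂, ∑ u₃, ∑ a,
            fU₁ u₁ * (fU₂ u₂ * fA (u₁₀, u₂, x₀) a * fY (u₂, u₃₀, a, b₀) y) * fU₃ u₃ * fB b₀)
          + ∑ u₁, ∑ u₂, ∑ u₃, ∑ a,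
            fU₁ u₁ * (fU₂ u₂ * fU₃ u₃ * fY (u₂, u₃, a₀, b₁) y)
              * fA (u₁₀, u₂, x₀) a * fB b₁ := by
          simp only [Finset.sum_add_distrib]
      _ = fB b₀ * (∑ a, ∑ u₂, fU₂ u₂ * fA (u₁₀, u₂, x₀) a * fY (u₂, u₃₀, a, b₀) y)
          + fB b₁ * (∑ u₂, ∑ u₃, fU₂ u₂ * fU₃ u₃ * fY (u₂, u₃, a₀, b₁) y) := by
          congr 1
          · exact facL4 fU₁
              (fun u₂ a => fU₂ u₂ * fA (u₁₀, u₂, x₀) a * fY (u₂, u₃₀, a, b₀) y)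
              fU₃ (fB b₀) hU₁.2 hU₃.2
          · exact facL5 fU₁
              (fun u₂ u₃ => fU₂ u₂ * fU₃ u₃ * fY (u₂, u₃, a₀, b₁) y)
              (fun u₂ a => fA (u₁₀, u₂, x₀) a) (fB b₁) hU₁.2
              (fun u₂ => hA.2 (u₁₀, u₂, x₀))
  -- positivity
  have hpos2 : ∀ a, (0 : ℝ) < fB b₀ * (P * α a) := by
    intro a
    rw [← c2 a]
    exact Finset.sum_pos (fun y' _ => hpos x₀ a b₀ y') Finset.univ_nonempty
  have hb0 : fB b₀ ≠ 0 := fun h => by simpa [h] using (hpos2 a₀).ne'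
  have hPne : P ≠ 0 := fun h => by simpa [h] using (hpos2 a₀).ne'
  have hαne : ∀ a, α a ≠ 0 := fun a h => by simpa [h] using (hpos2 a).ne'
  -- pointwise simplification of the summand on the right-hand side
  have key : ∀ a,
      ((∑ b, ∑ y', dflightPr fU₁ fU₂ fU₃ fX fA fB fY x₀ a b y')
        / (∑ a', ∑ b, ∑ y', dflightPr fU₁ fU₂ fU₃ fX fA fB fY x₀ a' b y'))
      * (dflightPr fU₁ fU₂ fU₃ fX fA fB fY x₀ a b₀ y
        / ∑ y', dflightPr fU₁ fU₂ fU₃ fX fA fB fY x₀ a b₀ y') = β a y := by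
    intro a
    rw [c3 a, c5, c1 a y, c2 a, mul_div_mul_left _ _ hb0, mul_div_mul_left _ _ hPne,
      mul_div_cancel_left₀ _ hPne, mul_comm, div_mul_cancel₀ _ (hαne a)]
  have hsum : (∑ a,
      ((∑ b, ∑ y', dflightPr fU₁ fU₂ fU₃ fX fA fB fY x₀ a b y')
        / (∑ a', ∑ b, ∑ y', dflightPr fU₁ fU₂ fU₃ fX fA fB fY x₀ a' b y'))
      * (dflightPr fU₁ fU₂ fU₃ fX fA fB fY x₀ a b₀ y
        / ∑ y', dflightPr fU₁ fU₂ fU₃ fX fA fB fY x₀ a b₀ y'))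
      = ∑ a, β a y := Finset.sum_congr rfl fun a _ => key a
  rw [c8, c6, c7, hsum]
end

section
/- (Proposition 7, unidentifiability without the state constraint.) There exist finite state spaces for the variables (one may take U₁, U₂, U₃, X, A, Y binary and B with three states, with b₀ ≠ b₁ two of B's states and x₀ a state of X) and two models, i.e., two tuples of stochastic CPTs, both satisfying the CSI constraints f_A(a|u₁,u₂,x₀) independent of u₁, f_Y(y|u₂,u₃,a,b₀) independent of u₃, and f_Y(y|u₂,u₃,a,b₁) independent of a, such that the induced observational distributions are equal and strictly positive, Pr¹(x,a,b,y) = Pr²(x,a,b,y) > 0 for all instantiations, yet Pr¹_{X=x₀}(Y=y) ≠ Pr²_{X=x₀}(Y=y) for some state y. -/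
/- Auxiliary explicit tables for the two models. -/

/-- `fX(0|u₁,u₃)` for model g. -/
noncomputable def dfgs : Fin 2 → Fin 2 → ℝ := ![![1/2, 1/4], ![3/4, 1/2]]

/-- `fX(0|u₁,u₃)` for model h. -/
noncomputable def dfhs : Fin 2 → Fin 2 → ℝ := ![![5/8, 1/8], ![5/8, 5/8]]

/-- `fA(0|u₁,x)` for both models. -/
noncomputable def dfgt : Fin 2 → Fin 2 → ℝ := fun u₁ => ![1/2, ![(1:ℝ)/4, 3/4] u₁]

/-- `fY(0|u₃,a,b=2)` for model g. -/
noncomputable def dfgr : Fin 2 → Fin 2 → ℝ := ![![1/4, 1/2], ![3/4, 1/2]]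

/-- `fY(0|u₃,a,b=2)` for model h. -/
noncomputable def dfhr : Fin 2 → Fin 2 → ℝ := ![![2/11, 1/2], ![19/22, 1/2]]

/-- `fY(0| ...)` for model g. -/
noncomputable def dfgy : Fin 2 × Fin 2 × Fin 2 × Fin 3 → ℝ :=
  fun p => ![![(1:ℝ)/2, 1/3] p.2.2.1, 1/2, dfgr p.2.1 p.2.2.1] p.2.2.2

/-- `fY(0| ...)` for model h. -/
noncomputable def dfhy : Fin 2 × Fin 2 × Fin 2 × Fin 3 → ℝ :=
  fun p => ![![(1:ℝ)/2, 1/3] p.2.2.1, 1/2, dfhr p.2.1 p.2.2.1] p.2.2.2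

set_option maxHeartbeats 4000000 in
/-- Proposition 7, unidentifiability without the state constraint: with
`U₁, U₂, U₃, X, A, Y` binary and `B` with three states, there are two models
(CPTs `g…` and `h…`) satisfying the CSI constraints that induce the same
strictly positive observational distribution but disagree on `Pr_{X=x₀}(Y=y)`
for some `y`. -/
theorem dflight_unidentifiable_without_state_constraint :
    ∃ (b₀ b₁ : Fin 3), b₀ ≠ b₁ ∧
    ∃ (x₀ : Fin 2)
      (gU₁ hU₁ gU₂ hU₂ gU₃ hU₃ : Fin 2 → ℝ)
      (gX hX : Fin 2 × Fin 2 → Fin 2 → ℝ)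
      (gA hA : Fin 2 × Fin 2 × Fin 2 → Fin 2 → ℝ)
      (gB hB : Fin 3 → ℝ)
      (gY hY : Fin 2 × Fin 2 × Fin 2 × Fin 3 → Fin 2 → ℝ),
      IsDist gU₁ ∧ IsDist hU₁ ∧ IsDist gU₂ ∧ IsDist hU₂ ∧
      IsDist gU₃ ∧ IsDist hU₃ ∧ IsDist gB ∧ IsDist hB ∧
      IsCPT gX ∧ IsCPT hX ∧ IsCPT gA ∧ IsCPT hA ∧ IsCPT gY ∧ IsCPT hY ∧
      (∀ (a u₁ u₁' u₂ : Fin 2), gA (u₁, u₂, x₀) a = gA (u₁', u₂, x₀) a) ∧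
      (∀ (a u₁ u₁' u₂ : Fin 2), hA (u₁, u₂, x₀) a = hA (u₁', u₂, x₀) a) ∧
      (∀ (y u₂ u₃ u₃' a : Fin 2), gY (u₂, u₃, a, b₀) y = gY (u₂, u₃', a, b₀) y) ∧
      (∀ (y u₂ u₃ u₃' a : Fin 2), hY (u₂, u₃, a, b₀) y = hY (u₂, u₃', a, b₀) y) ∧
      (∀ (y u₂ u₃ a a' : Fin 2), gY (u₂, u₃, a, b₁) y = gY (u₂, u₃, a', b₁) y) ∧
      (∀ (y u₂ u₃ a a' : Fin 2), hY (u₂, u₃, a, b₁) y = hY (u₂, u₃, a', b₁) y) ∧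
      (∀ x a b y, dflightPr gU₁ gU₂ gU₃ gX gA gB gY x a b y
                    = dflightPr hU₁ hU₂ hU₃ hX hA hB hY x a b y) ∧
      (∀ x a b y, 0 < dflightPr gU₁ gU₂ gU₃ gX gA gB gY x a b y) ∧
      ∃ y, dflightInt gU₁ gU₂ gU₃ gA gB gY x₀ y
             ≠ dflightInt hU₁ hU₂ hU₃ hA hB hY x₀ y := by
  refine ⟨0, 1, by decide, 0,
    (fun _ => 1/2), (fun _ => 1/2), (fun _ => 1/2), (fun _ => 1/2),
    (fun _ => 1/2), (fun _ => 1/2),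
    (fun p => ![dfgs p.1 p.2, 1 - dfgs p.1 p.2]),
    (fun p => ![dfhs p.1 p.2, 1 - dfhs p.1 p.2]),
    (fun p => ![dfgt p.1 p.2.2, 1 - dfgt p.1 p.2.2]),
    (fun p => ![dfgt p.1 p.2.2, 1 - dfgt p.1 p.2.2]),
    (fun _ => 1/3), (fun _ => 1/3),
    (fun p => ![dfgy p, 1 - dfgy p]),
    (fun p => ![dfhy p, 1 - dfhy p]),
    ?_, ?_, ?_, ?_, ?_, ?_, ?_, ?_, ?_, ?_, ?_, ?_, ?_, ?_,
    ?_, ?_, ?_, ?_, ?_, ?_, ?_, ?_, ?_⟩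
  · exact ⟨fun _ => by norm_num, by simp [Fin.sum_univ_succ]⟩
  · exact ⟨fun _ => by norm_num, by simp [Fin.sum_univ_succ]⟩
  · exact ⟨fun _ => by norm_num, by simp [Fin.sum_univ_succ]⟩
  · exact ⟨fun _ => by norm_num, by simp [Fin.sum_univ_succ]⟩
  · exact ⟨fun _ => by norm_num, by simp [Fin.sum_univ_succ]⟩
  · exact ⟨fun _ => by norm_num, by simp [Fin.sum_univ_succ]⟩
  · exact ⟨fun _ => by norm_num, by norm_num [Fin.sum_univ_succ]⟩
  · exact ⟨fun _ => by norm_num, by norm_num [Fin.sum_univ_succ]⟩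
  · exact ⟨fun p z => by fin_cases p <;> fin_cases z <;> norm_num [dfgs],
      fun p => by fin_cases p <;> norm_num [Fin.sum_univ_succ, dfgs]⟩
  · exact ⟨fun p z => by fin_cases p <;> fin_cases z <;> norm_num [dfhs],
      fun p => by fin_cases p <;> norm_num [Fin.sum_univ_succ, dfhs]⟩
  · exact ⟨fun p z => by fin_cases p <;> fin_cases z <;> norm_num [dfgt],
      fun p => by fin_cases p <;> norm_num [Fin.sum_univ_succ, dfgt]⟩
  · exact ⟨fun p z => by fin_cases p <;> fin_cases z <;> norm_num [dfgt],
      fun p => by fin_cases p <;> norm_num [Fin.sum_univ_succ, dfgt]⟩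
  · exact ⟨fun p z => by fin_cases p <;> fin_cases z <;> norm_num [dfgy, dfgr],
      fun p => by fin_cases p <;> norm_num [Fin.sum_univ_succ, dfgy, dfgr]⟩
  · exact ⟨fun p z => by fin_cases p <;> fin_cases z <;> norm_num [dfhy, dfhr],
      fun p => by fin_cases p <;> norm_num [Fin.sum_univ_succ, dfhy, dfhr]⟩
  · intro a u₁ u₁' u₂; fin_cases a <;> fin_cases u₁ <;> fin_cases u₁' <;> norm_num [dfgt]
  · intro a u₁ u₁' u₂; fin_cases a <;> fin_cases u₁ <;> fin_cases u₁' <;> norm_num [dfgt]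
  · intro y u₂ u₃ u₃' a; fin_cases y <;> fin_cases u₃ <;> fin_cases u₃' <;>
      fin_cases a <;> norm_num [dfgy]
  · intro y u₂ u₃ u₃' a; fin_cases y <;> fin_cases u₃ <;> fin_cases u₃' <;>
      fin_cases a <;> norm_num [dfhy]
  · intro y u₂ u₃ a a'; fin_cases y <;> fin_cases u₃ <;> fin_cases a <;>
      fin_cases a' <;> norm_num [dfgy]
  · intro y u₂ u₃ a a'; fin_cases y <;> fin_cases u₃ <;> fin_cases a <;>
      fin_cases a' <;> norm_num [dfhy]
  · intro x a b y
    fin_cases x <;> fin_cases a <;> fin_cases b <;> fin_cases y <;>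
      norm_num [dflightPr, Fin.sum_univ_succ, dfgs, dfhs, dfgt, dfgy, dfhy, dfgr, dfhr]
  · intro x a b y
    fin_cases x <;> fin_cases a <;> fin_cases b <;> fin_cases y <;>
      norm_num [dflightPr, Fin.sum_univ_succ, dfgs, dfgt, dfgy, dfgr]
  · refine ⟨0, ?_⟩
    norm_num [dflightInt, Fin.sum_univ_succ, dfgt, dfgy, dfhy, dfgr, dfhr]
end

section
/- (Proposition 8, identifying formula for the context B=b₀.) Let B be binary with states {b₀, b₁}. Assume the conditional functional dependencies [A, B=b₀] → D and [C, B=b₁] → E: for every a, f_D(·|a,b₀) takes values in {0,1}, and for every c, f_E(·|b₁,c) takes values in {0,1}. If the observational distribution is strictly positive, then for all states x, y: Pr_{X=x}(Y=y, B=b₀) = Pr(B=b₀) · ∑_{a,c} Pr(A=a) · Pr(C=c) · ∑_{φ} Pr(F=φ | A=a, B=b₀, C=c) · Pr(Y=y | A=a, B=b₀, C=c, F=φ, X=x), where all marginal and conditional probabilities on the right-hand side are computed from the observational distribution Pr (conditionals as ratios). -/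
/-- Observational distribution of the hospital graph:
`Pr(a,b,c,φ,x,y) = ∑_{d,e} f_A(a) f_B(b) f_C(c) f_D(d|a,b) f_E(e|b,c)
f_F(φ|d,e) f_X(x|d) f_Y(y|x,φ,e)`. -/
noncomputable def hospPr {A B C D E F X Y : Type*} [Fintype D] [Fintype E]
    (fA : A → ℝ) (fB : B → ℝ) (fC : C → ℝ) (fD : A × B → D → ℝ)
    (fE : B × C → E → ℝ) (fF : D × E → F → ℝ) (fX : D → X → ℝ)
    (fY : X × F × E → Y → ℝ) (a : A) (b : B) (c : C) (φ : F) (x : X) (y : Y) : ℝ :=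
  ∑ d, ∑ e, fA a * fB b * fC c * fD (a, b) d * fE (b, c) e
    * fF (d, e) φ * fX d x * fY (x, φ, e) y

/-- Interventional quantity of the hospital graph (intervening `X = x`):
`Pr_{X=x}(Y=y, B=b) = ∑_{a,c,d,e,φ} f_A(a) f_B(b) f_C(c) f_D(d|a,b) f_E(e|b,c)
f_F(φ|d,e) f_Y(y|x,φ,e)`. -/
noncomputable def hospInt {A B C D E F X Y : Type*}
    [Fintype A] [Fintype C] [Fintype D] [Fintype E] [Fintype F]
    (fA : A → ℝ) (fB : B → ℝ) (fC : C → ℝ) (fD : A × B → D → ℝ)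
    (fE : B × C → E → ℝ) (fF : D × E → F → ℝ)
    (fY : X × F × E → Y → ℝ) (x : X) (y : Y) (b : B) : ℝ :=
  ∑ a, ∑ c, ∑ d, ∑ e, ∑ φ, fA a * fB b * fC c * fD (a, b) d * fE (b, c) e
    * fF (d, e) φ * fY (x, φ, e) y

/-- If a nonnegative 0/1-valued function sums to 1 over a finite type, it is the
indicator of a unique point. -/
lemma exists_indicator {D : Type*} [Fintype D] [DecidableEq D] (f : D → ℝ)
    (h01 : ∀ d, f d = 0 ∨ f d = 1) (hsum : ∑ d, f d = 1) :
    ∃ d₀, ∀ d, f d = if d = d₀ then 1 else 0 := by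
  obtain ⟨d₀, hd₀⟩ : ∃ d, f d ≠ 0 := by
    by_contra h
    push_neg at h
    simp [h] at hsum
  have h1 : f d₀ = 1 := (h01 d₀).resolve_left hd₀
  refine ⟨d₀, fun d => ?_⟩
  by_cases hd : d = d₀
  · simp [hd, h1]
  · simp only [hd, if_false]
    by_contra h0
    have h1' : f d = 1 := (h01 d).resolve_left h0
    have hnn : ∀ z, 0 ≤ f z := fun z => by rcases h01 z with h | h <;> simp [h]
    have hle : ∑ z ∈ ({d, d₀} : Finset D), f z ≤ ∑ z, f z :=
      Finset.sum_le_sum_of_subset_of_nonneg (Finset.subset_univ _)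
        (fun z _ _ => hnn z)
    rw [Finset.sum_pair hd, h1, h1', hsum] at hle
    norm_num at hle

/-- Summing out a stochastic last factor. -/
lemma hosp_sum_collapse {ι κ Z : Type*} [Fintype ι] [Fintype κ] [Fintype Z]
    (s : ι → κ → ℝ) (t : ι → κ → Z → ℝ) (h : ∀ i k, ∑ z, t i k z = 1) :
    (∑ z, ∑ i, ∑ k, s i k * t i k z) = ∑ i, ∑ k, s i k := by
  rw [Finset.sum_comm]
  refine Finset.sum_congr rfl fun i _ => ?_
  rw [Finset.sum_comm]
  refine Finset.sum_congr rfl fun k _ => ?_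
  rw [← Finset.mul_sum, h, mul_one]

/-- Proposition 8, identifying formula for the context `B = b₀`, under the
conditional functional dependencies `[A, B=b₀] → D` and `[C, B=b₁] → E`. -/
theorem hospital_identify_b0
    {A B C D E F X Y : Type*}
    [Fintype A] [Fintype B] [Fintype C] [Fintype D] [Fintype E] [Fintype F]
    [Fintype X] [Fintype Y]
    [Nonempty A] [Nonempty B] [Nonempty C] [Nonempty D] [Nonempty E] [Nonempty F]
    [Nonempty X] [Nonempty Y]
    (fA : A → ℝ) (fB : B → ℝ) (fC : C → ℝ) (fD : A × B → D → ℝ)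
    (fE : B × C → E → ℝ) (fF : D × E → F → ℝ) (fX : D → X → ℝ)
    (fY : X × F × E → Y → ℝ)
    (hA : IsDist fA) (hB : IsDist fB) (hC : IsDist fC) (hD : IsCPT fD)
    (hE : IsCPT fE) (hF : IsCPT fF) (hX : IsCPT fX) (hY : IsCPT fY)
    (b₀ b₁ : B) (hne : b₀ ≠ b₁) (hbin : ∀ b : B, b = b₀ ∨ b = b₁)
    (cfdD : ∀ (a : A) (d : D), fD (a, b₀) d = 0 ∨ fD (a, b₀) d = 1)
    (cfdE : ∀ (c : C) (e : E), fE (b₁, c) e = 0 ∨ fE (b₁, c) e = 1)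
    (Pobs : A → B → C → F → X → Y → ℝ)
    (hPobs : ∀ a b c φ x y, Pobs a b c φ x y = hospPr fA fB fC fD fE fF fX fY a b c φ x y)
    (hpos : ∀ a b c φ x y, 0 < Pobs a b c φ x y) :
    ∀ (x : X) (y : Y),
      hospInt fA fB fC fD fE fF fY x y b₀
        = (∑ a, ∑ c, ∑ φ, ∑ x', ∑ y', Pobs a b₀ c φ x' y')
          * ∑ a, ∑ c,
              (∑ b, ∑ c', ∑ φ, ∑ x', ∑ y', Pobs a b c' φ x' y')
              * (∑ a', ∑ b, ∑ φ, ∑ x', ∑ y', Pobs a' b c φ x' y')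
              * ∑ φ, ((∑ x', ∑ y', Pobs a b₀ c φ x' y')
                        / (∑ φ', ∑ x', ∑ y', Pobs a b₀ c φ' x' y'))
                  * (Pobs a b₀ c φ x y / ∑ y', Pobs a b₀ c φ x y') := by
  classical
  intro x y
  -- the deterministic value of D given A (in context b₀)
  have hd' : ∀ a : A, ∃ d₀ : D, ∀ d, fD (a, b₀) d = if d = d₀ then 1 else 0 :=
    fun a => exists_indicator _ (cfdD a) (hD.2 (a, b₀))
  choose d0 hd0 using hd'
  -- sum out y
  have SyG : ∀ a b c φ x', (∑ y', Pobs a b c φ x' y')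
      = ∑ d, ∑ e, fA a * fB b * fC c * fD (a, b) d * fE (b, c) e
          * fF (d, e) φ * fX d x' := by
    intro a b c φ x'
    simp only [hPobs, hospPr]
    exact hosp_sum_collapse
      (fun d e => fA a * fB b * fC c * fD (a, b) d * fE (b, c) e * fF (d, e) φ * fX d x')
      (fun d e y' => fY (x', φ, e) y') (fun d e => hY.2 _)
  -- sum out x, y
  have SxyG : ∀ a b c φ, (∑ x', ∑ y', Pobs a b c φ x' y')
      = ∑ d, ∑ e, fA a * fB b * fC c * fD (a, b) d * fE (b, c) e * fF (d, e) φ := by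
    intro a b c φ
    simp only [SyG]
    exact hosp_sum_collapse
      (fun d e => fA a * fB b * fC c * fD (a, b) d * fE (b, c) e * fF (d, e) φ)
      (fun d e x' => fX d x') (fun d e => hX.2 _)
  -- sum out φ, x, y
  have SφG : ∀ a b c, (∑ φ, ∑ x', ∑ y', Pobs a b c φ x' y')
      = fA a * fB b * fC c := by
    intro a b c
    simp only [SxyG]
    rw [hosp_sum_collapse
      (fun d e => fA a * fB b * fC c * fD (a, b) d * fE (b, c) e)
      (fun d e φ => fF (d, e) φ) (fun d e => hF.2 _)]
    have he : ∀ d, (∑ e, fA a * fB b * fC c * fD (a, b) d * fE (b, c) e)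
        = fA a * fB b * fC c * fD (a, b) d := fun d => by
      rw [← Finset.mul_sum, hE.2, mul_one]
    rw [Finset.sum_congr rfl fun d _ => he d, ← Finset.mul_sum, hD.2, mul_one]
  -- marginals
  have PrB0 : (∑ a, ∑ c, ∑ φ, ∑ x', ∑ y', Pobs a b₀ c φ x' y') = fB b₀ := by
    simp only [SφG]
    have hc : ∀ a : A, (∑ c, fA a * fB b₀ * fC c) = fA a * fB b₀ := fun a => by
      rw [← Finset.mul_sum, hC.2, mul_one]
    rw [Finset.sum_congr rfl fun a _ => hc a, ← Finset.sum_mul, hA.2, one_mul]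
  have PrA : ∀ a, (∑ b, ∑ c', ∑ φ, ∑ x', ∑ y', Pobs a b c' φ x' y') = fA a := by
    intro a
    simp only [SφG]
    have hc : ∀ b, (∑ c', fA a * fB b * fC c') = fA a * fB b := fun b => by
      rw [← Finset.mul_sum, hC.2, mul_one]
    rw [Finset.sum_congr rfl fun b _ => hc b, ← Finset.mul_sum, hB.2, mul_one]
  have PrC : ∀ c, (∑ a', ∑ b, ∑ φ, ∑ x', ∑ y', Pobs a' b c φ x' y') = fC c := by
    intro c
    simp only [SφG]
    have hb : ∀ a', (∑ b, fA a' * fB b * fC c) = fA a' * fC c := fun a' => by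
      rw [Finset.sum_congr rfl fun b _ =>
            (by ring : fA a' * fB b * fC c = fA a' * fC c * fB b),
          ← Finset.mul_sum, hB.2, mul_one]
    rw [Finset.sum_congr rfl fun a' _ => hb a', ← Finset.sum_mul, hA.2, one_mul]
  -- collapsed forms in the context b₀
  have F3 : ∀ a c φ, (∑ x', ∑ y', Pobs a b₀ c φ x' y')
      = fA a * fB b₀ * fC c * ∑ e, fE (b₀, c) e * fF (d0 a, e) φ := by
    intro a c φ
    rw [SxyG]
    simp only [hd0, mul_ite, ite_mul, mul_one, mul_zero, one_mul, zero_mul,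
      Finset.sum_ite_irrel, Finset.sum_const_zero, Finset.sum_ite_eq',
      Finset.mem_univ, if_true]
    rw [Finset.mul_sum]
    exact Finset.sum_congr rfl fun e _ => by ring
  have F2 : ∀ a c φ x', (∑ y', Pobs a b₀ c φ x' y')
      = fA a * fB b₀ * fC c * fX (d0 a) x'
          * ∑ e, fE (b₀, c) e * fF (d0 a, e) φ := by
    intro a c φ x'
    rw [SyG]
    simp only [hd0, mul_ite, ite_mul, mul_one, mul_zero, one_mul, zero_mul,
      Finset.sum_ite_irrel, Finset.sum_const_zero, Finset.sum_ite_eq',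
      Finset.mem_univ, if_true]
    rw [Finset.mul_sum]
    exact Finset.sum_congr rfl fun e _ => by ring
  have F1 : ∀ a c φ x' y', Pobs a b₀ c φ x' y'
      = fA a * fB b₀ * fC c * fX (d0 a) x'
          * ∑ e, fE (b₀, c) e * fF (d0 a, e) φ * fY (x', φ, e) y' := by
    intro a c φ x' y'
    rw [hPobs]
    simp only [hospPr, hd0, mul_ite, ite_mul, mul_one, mul_zero, one_mul, zero_mul,
      Finset.sum_ite_irrel, Finset.sum_const_zero, Finset.sum_ite_eq',
      Finset.mem_univ, if_true]
    rw [Finset.mul_sum]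
    exact Finset.sum_congr rfl fun e _ => by ring
  -- positivity facts
  have hy_pos : ∀ a c φ x', 0 < ∑ y', Pobs a b₀ c φ x' y' := fun a c φ x' =>
    Finset.sum_pos (fun y' _ => hpos _ _ _ _ _ _) Finset.univ_nonempty
  have hxy_pos : ∀ a c φ, 0 < ∑ x', ∑ y', Pobs a b₀ c φ x' y' := fun a c φ =>
    Finset.sum_pos (fun x' _ => hy_pos a c φ x') Finset.univ_nonempty
  have hK : ∀ a c, 0 < fA a * fB b₀ * fC c := by
    intro a c
    rw [← SφG a b₀ c]
    exact Finset.sum_pos (fun φ _ => hxy_pos a c φ) Finset.univ_nonempty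
  have hG : ∀ a c φ, 0 < ∑ e, fE (b₀, c) e * fF (d0 a, e) φ := by
    intro a c φ
    have h := hxy_pos a c φ
    rw [F3] at h
    nlinarith [hK a c]
  have hXp : ∀ (a : A) (c : C) (x' : X), 0 < fX (d0 a) x' := by
    intro a c x'
    have h := hy_pos a c (Classical.arbitrary F) x'
    rw [F2] at h
    nlinarith [mul_pos (hK a c) (hG a c (Classical.arbitrary F)), h]
  -- simplify the inner summand
  have inner : ∀ a c φ,
      ((fA a * fB b₀ * fC c * ∑ e, fE (b₀, c) e * fF (d0 a, e) φ)
          / (fA a * fB b₀ * fC c))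
        * ((fA a * fB b₀ * fC c * fX (d0 a) x
              * ∑ e, fE (b₀, c) e * fF (d0 a, e) φ * fY (x, φ, e) y)
            / (fA a * fB b₀ * fC c * fX (d0 a) x
                * ∑ e, fE (b₀, c) e * fF (d0 a, e) φ))
      = ∑ e, fE (b₀, c) e * fF (d0 a, e) φ * fY (x, φ, e) y := by
    intro a c φ
    rw [mul_div_cancel_left₀ _ (hK a c).ne']
    rw [mul_div_mul_left _ _ (mul_pos (hK a c) (hXp a c x)).ne']
    rw [mul_comm, div_mul_cancel₀ _ (hG a c φ).ne']
  -- rewrite the right-hand side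
  rw [PrB0]
  simp only [PrA, PrC]
  simp only [SφG]
  simp only [F3]
  simp only [F2]
  simp only [F1]
  simp only [inner]
  -- final comparison
  simp only [hospInt, Finset.mul_sum]
  refine Finset.sum_congr rfl fun a _ => Finset.sum_congr rfl fun c _ => ?_
  simp only [hd0, mul_ite, ite_mul, mul_one, mul_zero, one_mul, zero_mul,
    Finset.sum_ite_irrel, Finset.sum_const_zero, Finset.sum_ite_eq',
    Finset.mem_univ, if_true]
  rw [Finset.sum_comm]
  exact Finset.sum_congr rfl fun φ _ => Finset.sum_congr rfl fun e _ => by ring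
end

section
/- (Proposition 8, identifying formula for the context B=b₁.) Let B be binary with states {b₀, b₁}. Assume the conditional functional dependencies [A, B=b₀] → D and [C, B=b₁] → E: for every a, f_D(·|a,b₀) takes values in {0,1}, and for every c, f_E(·|b₁,c) takes values in {0,1}. If the observational distribution is strictly positive, then for all states x, y: Pr_{X=x}(Y=y, B=b₁) = Pr(B=b₁) · ∑_{a,c} Pr(A=a) · Pr(C=c) · ∑_{φ} Pr(Y=y | B=b₁, C=c, X=x, F=φ) · ( ∑_{x'} Pr(F=φ | A=a, B=b₁, C=c, X=x') · Pr(X=x' | A=a, B=b₁) ), where all marginal and conditional probabilities on the right-hand side are computed from the observational distribution Pr (conditionals as ratios). -/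
lemma collapse_mid {Z : Type*} [Fintype Z] (v : Z → ℝ) (f : Z → ℝ) (u : ℝ)
    (h : ∑ z, v z = 1) (hf : ∀ z, f z = v z * u) : ∑ z, f z = u := by
  rw [Finset.sum_congr rfl fun z _ => hf z, ← Finset.sum_mul, h, one_mul]

lemma sum_factor {Z : Type*} [Fintype Z] (f : Z → ℝ) (g : Z → ℝ) (u : ℝ)
    (hf : ∀ z, f z = g z * u) : ∑ z, f z = (∑ z, g z) * u := by
  rw [Finset.sum_congr rfl fun z _ => hf z, ← Finset.sum_mul]

lemma swap_collapse1 {D Z : Type*} [Fintype D] [Fintype Z]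
    (f : Z → D → ℝ) (g : D → ℝ) (v : D → Z → ℝ)
    (h : ∀ d, ∑ z, v d z = 1) (hf : ∀ z d, f z d = v d z * g d) :
    ∑ z, ∑ d, f z d = ∑ d, g d := by
  rw [Finset.sum_comm]
  exact Finset.sum_congr rfl fun d _ => collapse_mid (v d) _ _ (h d) fun z => hf z d

lemma swap_collapse2 {D E Z : Type*} [Fintype D] [Fintype E] [Fintype Z]
    (f : Z → D → E → ℝ) (g : D → E → ℝ) (v : D → E → Z → ℝ)
    (h : ∀ d e, ∑ z, v d e z = 1) (hf : ∀ z d e, f z d e = v d e z * g d e) :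
    ∑ z, ∑ d, ∑ e, f z d e = ∑ d, ∑ e, g d e := by
  rw [Finset.sum_comm]
  refine Finset.sum_congr rfl fun d _ => ?_
  rw [Finset.sum_comm]
  exact Finset.sum_congr rfl fun e _ => collapse_mid (v d e) _ _ (h d e) fun z => hf z d e
/-- Proposition 8, identifying formula for the context `B = b₁`, under the
conditional functional dependencies `[A, B=b₀] → D` and `[C, B=b₁] → E`. -/
theorem hospital_identify_b1
    {A B C D E F X Y : Type*}
    [Fintype A] [Fintype B] [Fintype C] [Fintype D] [Fintype E] [Fintype F]
    [Fintype X] [Fintype Y]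
    [Nonempty A] [Nonempty B] [Nonempty C] [Nonempty D] [Nonempty E] [Nonempty F]
    [Nonempty X] [Nonempty Y]
    (fA : A → ℝ) (fB : B → ℝ) (fC : C → ℝ) (fD : A × B → D → ℝ)
    (fE : B × C → E → ℝ) (fF : D × E → F → ℝ) (fX : D → X → ℝ)
    (fY : X × F × E → Y → ℝ)
    (hA : IsDist fA) (hB : IsDist fB) (hC : IsDist fC) (hD : IsCPT fD)
    (hE : IsCPT fE) (hF : IsCPT fF) (hX : IsCPT fX) (hY : IsCPT fY)
    (b₀ b₁ : B) (hne : b₀ ≠ b₁) (hbin : ∀ b : B, b = b₀ ∨ b = b₁)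
    (cfdD : ∀ (a : A) (d : D), fD (a, b₀) d = 0 ∨ fD (a, b₀) d = 1)
    (cfdE : ∀ (c : C) (e : E), fE (b₁, c) e = 0 ∨ fE (b₁, c) e = 1)
    (Pobs : A → B → C → F → X → Y → ℝ)
    (hPobs : ∀ a b c φ x y, Pobs a b c φ x y = hospPr fA fB fC fD fE fF fX fY a b c φ x y)
    (hpos : ∀ a b c φ x y, 0 < Pobs a b c φ x y) :
    ∀ (x : X) (y : Y),
      hospInt fA fB fC fD fE fF fY x y b₁
        = (∑ a, ∑ c, ∑ φ, ∑ x', ∑ y', Pobs a b₁ c φ x' y')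
          * ∑ a, ∑ c,
              (∑ b, ∑ c', ∑ φ, ∑ x', ∑ y', Pobs a b c' φ x' y')
              * (∑ a', ∑ b, ∑ φ, ∑ x', ∑ y', Pobs a' b c φ x' y')
              * ∑ φ,
                  ((∑ a', Pobs a' b₁ c φ x y)
                      / (∑ a', ∑ y', Pobs a' b₁ c φ x y'))
                  * ∑ x',
                      ((∑ y', Pobs a b₁ c φ x' y')
                          / (∑ φ', ∑ y', Pobs a b₁ c φ' x' y'))
                      * ((∑ c', ∑ φ', ∑ y', Pobs a b₁ c' φ' x' y')
                          / (∑ c', ∑ φ', ∑ x'', ∑ y', Pobs a b₁ c' φ' x'' y')) := by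
  classical
  intro x y
  obtain ⟨hA0, hA1⟩ := hA
  obtain ⟨hB0, hB1⟩ := hB
  obtain ⟨hC0, hC1⟩ := hC
  obtain ⟨hD0, hD1⟩ := hD
  obtain ⟨hE0, hEsum⟩ := hE
  obtain ⟨hF0, hF1⟩ := hF
  obtain ⟨hX0, hX1⟩ := hX
  obtain ⟨hY0, hY1⟩ := hY
  -- the deterministic value of E in context B = b₁
  have hdelta : ∀ c : C, ∃ e₀ : E, fE (b₁, c) e₀ = 1 ∧ ∀ e, e ≠ e₀ → fE (b₁, c) e = 0 := by
    intro c
    obtain ⟨e₀, he₀⟩ : ∃ e₀, fE (b₁, c) e₀ = 1 := by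
      by_contra h
      push_neg at h
      have h0 : ∀ e, fE (b₁, c) e = 0 := fun e => (cfdE c e).resolve_right (h e)
      have := hEsum (b₁, c)
      simp [h0] at this
    refine ⟨e₀, he₀, fun e hne' => ?_⟩
    rcases cfdE c e with h | h
    · exact h
    · exfalso
      have hle : fE (b₁, c) e₀ + fE (b₁, c) e ≤ ∑ e', fE (b₁, c) e' := by
        have := Finset.sum_le_sum_of_subset_of_nonneg (f := fun e' => fE (b₁, c) e')
          (Finset.subset_univ ({e₀, e} : Finset E)) (fun i _ _ => hE0 _ i)
        rwa [Finset.sum_pair (Ne.symm hne')] at this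
      rw [hEsum (b₁, c), he₀, h] at hle
      linarith
  choose e₀ he1 he0 using hdelta
  -- closed form for the observational distribution in context B = b₁
  have hPr : ∀ a c φ x' y', Pobs a b₁ c φ x' y'
      = fA a * fB b₁ * fC c *
        ∑ d, fD (a, b₁) d * fX d x' * fF (d, e₀ c) φ * fY (x', φ, e₀ c) y' := by
    intro a c φ x' y'
    rw [hPobs]
    simp only [hospPr, Finset.mul_sum]
    refine Finset.sum_congr rfl fun d _ => ?_
    rw [Finset.sum_eq_single (e₀ c) (fun e _ h => by rw [he0 c e h]; ring)
        (fun h => absurd (Finset.mem_univ _) h), he1 c]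
    ring
  -- full marginal over φ, x, y
  have hM3 : ∀ a b c, (∑ φ, ∑ x', ∑ y', Pobs a b c φ x' y') = fA a * fB b * fC c := by
    intro a b c
    simp only [hPobs, hospPr]
    have s1 : ∀ (φ : F) (x' : X),
        (∑ y', ∑ d, ∑ e, fA a * fB b * fC c * fD (a, b) d * fE (b, c) e
          * fF (d, e) φ * fX d x' * fY (x', φ, e) y')
        = ∑ d, ∑ e, fA a * fB b * fC c * fD (a, b) d * fE (b, c) e
          * fF (d, e) φ * fX d x' :=
      fun φ x' => swap_collapse2 _ _ (fun d e y' => fY (x', φ, e) y')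
        (fun d e => hY1 _) (fun y' d e => by ring)
    have s2 : ∀ (φ : F),
        (∑ x', ∑ d, ∑ e, fA a * fB b * fC c * fD (a, b) d * fE (b, c) e
          * fF (d, e) φ * fX d x')
        = ∑ d, ∑ e, fA a * fB b * fC c * fD (a, b) d * fE (b, c) e * fF (d, e) φ :=
      fun φ => swap_collapse2 _ _ (fun d e x' => fX d x')
        (fun d e => hX1 d) (fun x' d e => by ring)
    have s3 : (∑ φ, ∑ d, ∑ e, fA a * fB b * fC c * fD (a, b) d * fE (b, c) e * fF (d, e) φ)
        = ∑ d, ∑ e, fA a * fB b * fC c * fD (a, b) d * fE (b, c) e :=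
      swap_collapse2 _ _ (fun d e φ => fF (d, e) φ)
        (fun d e => hF1 (d, e)) (fun φ d e => by ring)
    have s4 : (∑ d, ∑ e, fA a * fB b * fC c * fD (a, b) d * fE (b, c) e)
        = ∑ d, fA a * fB b * fC c * fD (a, b) d :=
      Finset.sum_congr rfl fun d _ =>
        collapse_mid (fE (b, c)) _ _ (hEsum (b, c)) (fun e => by ring)
    rw [Finset.sum_congr rfl fun φ _ => Finset.sum_congr rfl fun x' _ => s1 φ x',
      Finset.sum_congr rfl fun φ _ => s2 φ, s3, s4]
    exact collapse_mid (fD (a, b)) _ _ (hD1 (a, b)) (fun d => by ring)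
  -- positivity of the basic factors
  have possum3 : ∀ a b c, 0 < ∑ φ, ∑ x', ∑ y', Pobs a b c φ x' y' := fun a b c =>
    Finset.sum_pos (fun _ _ => Finset.sum_pos (fun _ _ => Finset.sum_pos
      (fun _ _ => hpos _ _ _ _ _ _) Finset.univ_nonempty) Finset.univ_nonempty)
      Finset.univ_nonempty
  have hprod : ∀ a b c, 0 < fA a * fB b * fC c := fun a b c => hM3 a b c ▸ possum3 a b c
  have hfA : ∀ a, 0 < fA a := by
    intro a
    rcases (hA0 a).lt_or_eq with h | h
    · exact h
    · exfalso
      have := hprod a b₁ (Classical.arbitrary C)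
      rw [← h, zero_mul, zero_mul] at this
      exact lt_irrefl _ this
  have hfB : ∀ b, 0 < fB b := by
    intro b
    rcases (hB0 b).lt_or_eq with h | h
    · exact h
    · exfalso
      have := hprod (Classical.arbitrary A) b (Classical.arbitrary C)
      rw [← h, mul_zero, zero_mul] at this
      exact lt_irrefl _ this
  have hfC : ∀ c, 0 < fC c := by
    intro c
    rcases (hC0 c).lt_or_eq with h | h
    · exact h
    · exfalso
      have := hprod (Classical.arbitrary A) b₁ c
      rw [← h, mul_zero] at this
      exact lt_irrefl _ this
  -- marginals within the context B = b₁
  have h6 : ∀ a c φ x', (∑ y', Pobs a b₁ c φ x' y')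
      = fA a * fB b₁ * fC c * ∑ d, fD (a, b₁) d * fX d x' * fF (d, e₀ c) φ := by
    intro a c φ x'
    simp only [hPr, Finset.mul_sum]
    exact swap_collapse1 _ _ (fun d y' => fY (x', φ, e₀ c) y') (fun d => hY1 _)
      (fun y' d => by ring)
  have h7 : ∀ a c x', (∑ φ', ∑ y', Pobs a b₁ c φ' x' y')
      = fA a * fB b₁ * fC c * ∑ d, fD (a, b₁) d * fX d x' := by
    intro a c x'
    simp only [h6, Finset.mul_sum]
    exact swap_collapse1 _ _ (fun d φ' => fF (d, e₀ c) φ') (fun d => hF1 _)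
      (fun φ' d => by ring)
  have h8 : ∀ a x', (∑ c', ∑ φ', ∑ y', Pobs a b₁ c' φ' x' y')
      = fA a * fB b₁ * ∑ d, fD (a, b₁) d * fX d x' := by
    intro a x'
    simp only [h7, Finset.mul_sum]
    exact swap_collapse1 _ _ (fun d c' => fC c') (fun d => hC1) (fun c' d => by ring)
  have h9 : ∀ a, (∑ c', ∑ φ', ∑ x'', ∑ y', Pobs a b₁ c' φ' x'' y') = fA a * fB b₁ := by
    intro a
    simp only [hM3]
    exact collapse_mid fC _ _ hC1 (fun c' => by ring)
  have hT : ∀ a x', 0 < ∑ d, fD (a, b₁) d * fX d x' := by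
    intro a x'
    have hp : 0 < ∑ c', ∑ φ', ∑ y', Pobs a b₁ c' φ' x' y' :=
      Finset.sum_pos (fun _ _ => Finset.sum_pos (fun _ _ => Finset.sum_pos
        (fun _ _ => hpos _ _ _ _ _ _) Finset.univ_nonempty) Finset.univ_nonempty)
        Finset.univ_nonempty
    rw [h8 a x'] at hp
    nlinarith [mul_pos (hfA a) (hfB b₁)]
  -- the Y-ratio
  have hYnum : ∀ c φ, (∑ a', Pobs a' b₁ c φ x y)
      = (∑ a', fA a' * ∑ d, fD (a', b₁) d * fX d x * fF (d, e₀ c) φ)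
        * (fB b₁ * fC c * fY (x, φ, e₀ c) y) := by
    intro c φ
    have inner : ∀ a', (∑ d, fD (a', b₁) d * fX d x * fF (d, e₀ c) φ * fY (x, φ, e₀ c) y)
        = (∑ d, fD (a', b₁) d * fX d x * fF (d, e₀ c) φ) * fY (x, φ, e₀ c) y :=
      fun a' => by rw [← Finset.sum_mul]
    simp only [hPr, inner]
    exact sum_factor _ _ _ (fun a' => by ring)
  have hYden : ∀ c φ, (∑ a', ∑ y', Pobs a' b₁ c φ x y')
      = (∑ a', fA a' * ∑ d, fD (a', b₁) d * fX d x * fF (d, e₀ c) φ) * (fB b₁ * fC c) := by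
    intro c φ
    simp only [h6]
    exact sum_factor _ _ _ (fun a' => by ring)
  have hEM : ∀ c φ, 0 < ∑ a', fA a' * ∑ d, fD (a', b₁) d * fX d x * fF (d, e₀ c) φ := by
    intro c φ
    have hp : 0 < ∑ a', ∑ y', Pobs a' b₁ c φ x y' :=
      Finset.sum_pos (fun _ _ => Finset.sum_pos (fun _ _ => hpos _ _ _ _ _ _)
        Finset.univ_nonempty) Finset.univ_nonempty
    rw [hYden c φ] at hp
    nlinarith [mul_pos (hfB b₁) (hfC c)]
  have hYratio : ∀ c φ, (∑ a', Pobs a' b₁ c φ x y) / (∑ a', ∑ y', Pobs a' b₁ c φ x y')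
      = fY (x, φ, e₀ c) y := by
    intro c φ
    rw [hYnum c φ, hYden c φ, mul_div_mul_left _ _ (ne_of_gt (hEM c φ)),
      mul_div_cancel_left₀ _ (ne_of_gt (mul_pos (hfB b₁) (hfC c)))]
  -- the F/X part
  have hFX : ∀ a c φ,
      (∑ x', ((∑ y', Pobs a b₁ c φ x' y') / (∑ φ', ∑ y', Pobs a b₁ c φ' x' y'))
        * ((∑ c', ∑ φ', ∑ y', Pobs a b₁ c' φ' x' y')
            / (∑ c', ∑ φ', ∑ x'', ∑ y', Pobs a b₁ c' φ' x'' y')))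
      = ∑ d, fD (a, b₁) d * fF (d, e₀ c) φ := by
    intro a c φ
    have hx : ∀ x', ((∑ y', Pobs a b₁ c φ x' y') / (∑ φ', ∑ y', Pobs a b₁ c φ' x' y'))
        * ((∑ c', ∑ φ', ∑ y', Pobs a b₁ c' φ' x' y')
            / (∑ c', ∑ φ', ∑ x'', ∑ y', Pobs a b₁ c' φ' x'' y'))
        = ∑ d, fD (a, b₁) d * fX d x' * fF (d, e₀ c) φ := by
      intro x'
      rw [h6, h7, h8, h9]
      rw [mul_div_mul_left _ _ (ne_of_gt (mul_pos (mul_pos (hfA a) (hfB b₁)) (hfC c))),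
        mul_div_cancel_left₀ _ (ne_of_gt (mul_pos (hfA a) (hfB b₁))),
        div_mul_cancel₀ _ (ne_of_gt (hT a x'))]
    simp only [hx]
    exact swap_collapse1 _ _ (fun d x' => fX d x') (fun d => hX1 d) (fun x' d => by ring)
  -- the three plain marginals appearing in the formula
  have h1 : (∑ a, ∑ c, ∑ φ, ∑ x', ∑ y', Pobs a b₁ c φ x' y') = fB b₁ := by
    simp only [hM3]
    calc ∑ a, ∑ c, fA a * fB b₁ * fC c = ∑ a, fA a * fB b₁ :=
          Finset.sum_congr rfl fun a _ => collapse_mid fC _ _ hC1 (fun c => by ring)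
      _ = fB b₁ := collapse_mid fA _ _ hA1 (fun a => by ring)
  have hPA : ∀ a, (∑ b, ∑ c', ∑ φ, ∑ x', ∑ y', Pobs a b c' φ x' y') = fA a := by
    intro a
    simp only [hM3]
    calc ∑ b, ∑ c', fA a * fB b * fC c' = ∑ b, fA a * fB b :=
          Finset.sum_congr rfl fun b _ => collapse_mid fC _ _ hC1 (fun c' => by ring)
      _ = fA a := collapse_mid fB _ _ hB1 (fun b => by ring)
  have hPC : ∀ c, (∑ a', ∑ b, ∑ φ, ∑ x', ∑ y', Pobs a' b c φ x' y') = fC c := by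
    intro c
    simp only [hM3]
    calc ∑ a', ∑ b, fA a' * fB b * fC c = ∑ a', fA a' * fC c :=
          Finset.sum_congr rfl fun a' _ => collapse_mid fB _ _ hB1 (fun b => by ring)
      _ = fC c := collapse_mid fA _ _ hA1 (fun a' => by ring)
  -- assemble
  rw [h1]
  simp only [hPA, hPC, hYratio, hFX]
  simp only [hospInt, Finset.mul_sum]
  refine Finset.sum_congr rfl fun a _ => Finset.sum_congr rfl fun c _ => ?_
  have colE : ∀ d, (∑ e, ∑ φ, fA a * fB b₁ * fC c * fD (a, b₁) d * fE (b₁, c) e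
        * fF (d, e) φ * fY (x, φ, e) y)
      = ∑ φ, fA a * fB b₁ * fC c * fD (a, b₁) d * fE (b₁, c) (e₀ c)
        * fF (d, e₀ c) φ * fY (x, φ, e₀ c) y :=
    fun d => Finset.sum_eq_single (e₀ c)
      (fun e _ h => by simp [he0 c e h]) (fun h => absurd (Finset.mem_univ _) h)
  simp only [colE, he1, mul_one]
  rw [Finset.sum_comm]
  exact Finset.sum_congr rfl fun φ _ => Finset.sum_congr rfl fun d _ => by ring
end

section
/- (Proposition 8, unidentifiability half.) There exist finite state spaces for the variables (one may take A, C, X, F, Y binary, B with three states among which b₀ ≠ b₁, and D, E with four states each) and two models, i.e., two tuples of stochastic CPTs, both satisfying the conditional functional dependencies [A, B=b₀] → D and [C, B=b₁] → E (f_D(·|a,b₀) ∈ {0,1} for every a, and f_E(·|b₁,c) ∈ {0,1} for every c), such that the induced observational distributions are equal and strictly positive, Pr¹ = Pr² > 0 on all instantiations of (A,B,C,F,X,Y), yet Pr¹_{X=x}(Y=y) ≠ Pr²_{X=x}(Y=y) for some states x, y, where Pr_{X=x}(Y=y) := ∑_{b} Pr_{X=x}(Y=y, B=b). -/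
noncomputable def mA : Fin 2 → ℝ := fun _ => 1/2
noncomputable def mB : Fin 3 → ℝ := fun _ => 1/3
noncomputable def mDg : Fin 2 × Fin 3 → Fin 4 → ℝ := fun p =>
  ![![(1:ℝ),0,0,0], ![1/4,1/4,1/4,1/4], ![3/8,1/8,1/8,3/8]] p.2
noncomputable def mDh : Fin 2 × Fin 3 → Fin 4 → ℝ := fun p =>
  ![![(1:ℝ),0,0,0], ![1/4,1/4,1/4,1/4], ![1/8,3/8,3/8,1/8]] p.2
noncomputable def mE : Fin 3 × Fin 2 → Fin 4 → ℝ := fun p =>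
  ![![(1:ℝ)/4,1/4,1/4,1/4], ![1,0,0,0], ![1/4,1/4,1/4,1/4]] p.1
noncomputable def mFT : Fin 4 → Fin 4 → ℝ :=
  ![![1/6,1/2,1/3,1/3], ![1/2,1/6,1/3,1/3], ![2/3,2/3,2/3,2/3], ![2/3,2/3,1/2,5/6]]
noncomputable def mF : Fin 4 × Fin 4 → Fin 2 → ℝ := fun p =>
  ![mFT p.1 p.2, 1 - mFT p.1 p.2]
noncomputable def mX : Fin 4 → Fin 2 → ℝ :=
  ![![1/4,3/4], ![1/4,3/4], ![1/2,1/2], ![1/2,1/2]]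
noncomputable def mYT : Fin 2 → Fin 2 → Fin 4 → ℝ :=
  ![![![1/2,1/2,1/2,1/2], ![1/2,3/4,3/4,1/2]],
    ![![1/2,1/2,1/2,1/2], ![1/2,1/2,1/2,1/2]]]
noncomputable def mY : Fin 2 × Fin 2 × Fin 4 → Fin 2 → ℝ := fun p =>
  ![1 - mYT p.1 p.2.1 p.2.2, mYT p.1 p.2.1 p.2.2]

lemma mA_dist : IsDist mA := by
  constructor
  · intro z; norm_num [mA]
  · norm_num [mA, Fin.sum_univ_two]

lemma mB_dist : IsDist mB := by
  constructor
  · intro z; norm_num [mB]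
  · norm_num [mB, Fin.sum_univ_three]

lemma mDg_cpt : IsCPT mDg := by
  constructor
  · rintro ⟨a, b⟩ z
    fin_cases b <;> fin_cases z <;> norm_num [mDg]
  · rintro ⟨a, b⟩
    fin_cases b <;> norm_num [mDg, Fin.sum_univ_four, Matrix.cons_val_two, Matrix.cons_val_three, Matrix.vecHead, Matrix.vecTail]

lemma mDh_cpt : IsCPT mDh := by
  constructor
  · rintro ⟨a, b⟩ z
    fin_cases b <;> fin_cases z <;> norm_num [mDh]
  · rintro ⟨a, b⟩
    fin_cases b <;> norm_num [mDh, Fin.sum_univ_four, Matrix.cons_val_two, Matrix.cons_val_three, Matrix.vecHead, Matrix.vecTail]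

lemma mE_cpt : IsCPT mE := by
  constructor
  · rintro ⟨b, c⟩ z
    fin_cases b <;> fin_cases z <;> norm_num [mE]
  · rintro ⟨b, c⟩
    fin_cases b <;> norm_num [mE, Fin.sum_univ_four, Matrix.cons_val_two, Matrix.cons_val_three, Matrix.vecHead, Matrix.vecTail]

lemma mFT_mem : ∀ d e, 0 ≤ mFT d e ∧ mFT d e ≤ 1 := by
  intro d e
  fin_cases d <;> fin_cases e <;> norm_num [mFT]

lemma mF_cpt : IsCPT mF := by
  constructor
  · rintro ⟨d, e⟩ z
    have h := mFT_mem d e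
    fin_cases z <;> simp [mF] <;> linarith [h.1, h.2]
  · rintro ⟨d, e⟩
    simp [mF, Fin.sum_univ_two]

lemma mX_cpt : IsCPT mX := by
  constructor
  · intro d z
    fin_cases d <;> fin_cases z <;> norm_num [mX]
  · intro d
    fin_cases d <;> norm_num [mX, Fin.sum_univ_two]

lemma mYT_mem : ∀ x φ e, 0 ≤ mYT x φ e ∧ mYT x φ e ≤ 1 := by
  intro x φ e
  fin_cases x <;> fin_cases φ <;> fin_cases e <;> norm_num [mYT]

lemma mY_cpt : IsCPT mY := by
  constructor
  · rintro ⟨x, φ, e⟩ z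
    have h := mYT_mem x φ e
    fin_cases z <;> simp [mY] <;> linarith [h.1, h.2]
  · rintro ⟨x, φ, e⟩
    simp [mY, Fin.sum_univ_two]

lemma mDg_pos0 : ∀ (a : Fin 2) (b : Fin 3), 0 < mDg (a, b) 0 := by
  intro a b; fin_cases b <;> norm_num [mDg]

lemma mDh_pos0 : ∀ (a : Fin 2) (b : Fin 3), 0 < mDh (a, b) 0 := by
  intro a b; fin_cases b <;> norm_num [mDh]

lemma mE_pos0 : ∀ (b : Fin 3) (c : Fin 2), 0 < mE (b, c) 0 := by
  intro b c; fin_cases b <;> norm_num [mE]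

lemma mF_pos00 : ∀ (φ : Fin 2), 0 < mF (0, 0) φ := by
  intro φ; fin_cases φ <;> norm_num [mF, mFT]

lemma mX_pos0 : ∀ (x : Fin 2), 0 < mX 0 x := by
  intro x; fin_cases x <;> norm_num [mX]

lemma mY_pos0 : ∀ (x φ y : Fin 2), 0 < mY (x, φ, 0) y := by
  intro x φ y; fin_cases x <;> fin_cases φ <;> fin_cases y <;> norm_num [mY, mYT]

lemma hosp_pos : ∀ a b c φ x y, 0 < hospPr mA mB mA mDg mE mF mX mY a b c φ x y := by
  intro a b c φ x y
  unfold hospPr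
  have hnn : ∀ (d : Fin 4) (e : Fin 4),
      0 ≤ mA a * mB b * mA c * mDg (a, b) d * mE (b, c) e
        * mF (d, e) φ * mX d x * mY (x, φ, e) y := by
    intro d e
    have h1 := mDg_cpt.1 (a, b) d
    have h2 := mE_cpt.1 (b, c) e
    have h3 := mF_cpt.1 (d, e) φ
    have h4 := mX_cpt.1 d x
    have h5 := mY_cpt.1 (x, φ, e) y
    have ha : (0:ℝ) ≤ mA a := mA_dist.1 a
    have hc : (0:ℝ) ≤ mA c := mA_dist.1 c
    have hb : (0:ℝ) ≤ mB b := mB_dist.1 b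
    positivity
  have hpos : 0 < mA a * mB b * mA c * mDg (a, b) 0 * mE (b, c) 0
        * mF (0, 0) φ * mX 0 x * mY (x, φ, 0) y := by
    have h1 := mDg_pos0 a b
    have h2 := mE_pos0 b c
    have h3 := mF_pos00 φ
    have h4 := mX_pos0 x
    have h5 := mY_pos0 x φ y
    have ha : (0:ℝ) < mA a := by norm_num [mA]
    have hb : (0:ℝ) < mB b := by norm_num [mB]
    positivity
  refine Finset.sum_pos' (fun d _ => Finset.sum_nonneg (fun e _ => hnn d e)) ?_
  exact ⟨0, Finset.mem_univ _,
    Finset.sum_pos' (fun e _ => hnn 0 e) ⟨0, Finset.mem_univ _, hpos⟩⟩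

set_option maxHeartbeats 2000000 in
lemma hosp_eq : ∀ a b c φ x y, hospPr mA mB mA mDg mE mF mX mY a b c φ x y
                        = hospPr mA mB mA mDh mE mF mX mY a b c φ x y := by
  intro a b c φ x y
  fin_cases b
  · norm_num [hospPr, mDg, mDh]
  · norm_num [hospPr, mDg, mDh]
  · fin_cases φ <;> fin_cases x <;> fin_cases y <;>
      norm_num [hospPr, mA, mB, mDg, mDh, mE, mF, mFT, mX, mY, mYT, Fin.sum_univ_four,
        Matrix.vecHead, Matrix.vecTail, Matrix.cons_val_two, Matrix.cons_val_three]
set_option maxHeartbeats 4000000 in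
lemma hosp_int_ne :
    ∃ x y, (∑ b, hospInt mA mB mA mDg mE mF mY x y b)
             ≠ (∑ b, hospInt mA mB mA mDh mE mF mY x y b) := by
  refine ⟨0, 0, ?_⟩
  norm_num [hospInt, mA, mB, mDg, mDh, mE, mF, mFT, mY, mYT,
    Fin.sum_univ_four, Fin.sum_univ_three, Fin.sum_univ_two,
    Matrix.vecHead, Matrix.vecTail, Matrix.cons_val_two, Matrix.cons_val_three]

/-- Proposition 8, unidentifiability half: with `A, C, X, F, Y` binary, `B`
with three states, and `D, E` with four states each, there are two models
(CPTs `g…` and `h…`) satisfying the CFDs `[A, B=b₀] → D` and `[C, B=b₁] → E`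
that induce the same strictly positive observational distribution but disagree
on `Pr_{X=x}(Y=y) = ∑_b Pr_{X=x}(Y=y, B=b)` for some `x, y`. -/
theorem hospital_unidentifiable :
    ∃ (b₀ b₁ : Fin 3), b₀ ≠ b₁ ∧
    ∃ (gA hA gC hC : Fin 2 → ℝ) (gB hB : Fin 3 → ℝ)
      (gD hD : Fin 2 × Fin 3 → Fin 4 → ℝ)
      (gE hE : Fin 3 × Fin 2 → Fin 4 → ℝ)
      (gF hF : Fin 4 × Fin 4 → Fin 2 → ℝ)
      (gX hX : Fin 4 → Fin 2 → ℝ)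
      (gY hY : Fin 2 × Fin 2 × Fin 4 → Fin 2 → ℝ),
      IsDist gA ∧ IsDist hA ∧ IsDist gB ∧ IsDist hB ∧ IsDist gC ∧ IsDist hC ∧
      IsCPT gD ∧ IsCPT hD ∧ IsCPT gE ∧ IsCPT hE ∧ IsCPT gF ∧ IsCPT hF ∧
      IsCPT gX ∧ IsCPT hX ∧ IsCPT gY ∧ IsCPT hY ∧
      (∀ (a : Fin 2) (d : Fin 4), gD (a, b₀) d = 0 ∨ gD (a, b₀) d = 1) ∧
      (∀ (a : Fin 2) (d : Fin 4), hD (a, b₀) d = 0 ∨ hD (a, b₀) d = 1) ∧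
      (∀ (c : Fin 2) (e : Fin 4), gE (b₁, c) e = 0 ∨ gE (b₁, c) e = 1) ∧
      (∀ (c : Fin 2) (e : Fin 4), hE (b₁, c) e = 0 ∨ hE (b₁, c) e = 1) ∧
      (∀ a b c φ x y, hospPr gA gB gC gD gE gF gX gY a b c φ x y
                        = hospPr hA hB hC hD hE hF hX hY a b c φ x y) ∧
      (∀ a b c φ x y, 0 < hospPr gA gB gC gD gE gF gX gY a b c φ x y) ∧
      ∃ x y, (∑ b, hospInt gA gB gC gD gE gF gY x y b)
               ≠ (∑ b, hospInt hA hB hC hD hE hF hY x y b) := by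
  refine ⟨0, 1, by decide, mA, mA, mA, mA, mB, mB, mDg, mDh, mE, mE, mF, mF,
    mX, mX, mY, mY,
    mA_dist, mA_dist, mB_dist, mB_dist, mA_dist, mA_dist,
    mDg_cpt, mDh_cpt, mE_cpt, mE_cpt, mF_cpt, mF_cpt,
    mX_cpt, mX_cpt, mY_cpt, mY_cpt, ?_, ?_, ?_, ?_, hosp_eq, hosp_pos, hosp_int_ne⟩
  · intro a d; fin_cases d <;> norm_num [mDg]
  · intro a d; fin_cases d <;> norm_num [mDh]
  · intro c e; fin_cases e <;> norm_num [mE]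
  · intro c e; fin_cases e <;> norm_num [mE]
end

section
/- (Proposition 9, identifying formula for the context B=b₀.) Let B be binary with states {b₀, b₁} and fix states c₀ of C, x₀ of X, y₀ of Y. Assume the conditional functional dependencies [A, B=b₀] → D, [C, B=b₁] → E, and [A, C=c₀] → G: for every a, f_D(·|a,b₀) ∈ {0,1}; for every c, f_E(·|b₁,c) ∈ {0,1}; and for every a, f_G(·|a,c₀) ∈ {0,1}. If the observational distribution is strictly positive, then Pr_{C=c₀,X=x₀}(Y=y₀, B=b₀) = Pr(B=b₀) · ∑_{a} Pr(A=a) · ∑_{φ} Pr(F=φ | A=a, B=b₀, C=c₀) · Pr(Y=y₀ | A=a, B=b₀, C=c₀, F=φ, X=x₀), where all marginal and conditional probabilities on the right-hand side are computed from the observational distribution Pr (conditionals as ratios). -/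
/-- Observational distribution of the extended hospital graph:
`Pr(a,b,c,φ,x,y) = ∑_{d,e,γ} f_A(a) f_B(b) f_C(c) f_D(d|a,b) f_E(e|b,c)
f_G(γ|a,c) f_F(φ|d,e) f_X(x|d,γ) f_Y(y|x,e,φ,γ)`. -/
noncomputable def ehospPr {A B C D E F G X Y : Type*}
    [Fintype D] [Fintype E] [Fintype G]
    (fA : A → ℝ) (fB : B → ℝ) (fC : C → ℝ) (fD : A × B → D → ℝ)
    (fE : B × C → E → ℝ) (fG : A × C → G → ℝ) (fF : D × E → F → ℝ)
    (fX : D × G → X → ℝ) (fY : X × E × F × G → Y → ℝ)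
    (a : A) (b : B) (c : C) (φ : F) (x : X) (y : Y) : ℝ :=
  ∑ d, ∑ e, ∑ γ, fA a * fB b * fC c * fD (a, b) d * fE (b, c) e * fG (a, c) γ
    * fF (d, e) φ * fX (d, γ) x * fY (x, e, φ, γ) y

/-- Interventional quantity of the extended hospital graph (intervening
`C = c` and `X = x`): `Pr_{C=c,X=x}(Y=y, B=b) = ∑_{a,d,e,φ,γ} f_A(a) f_B(b)
f_D(d|a,b) f_E(e|b,c) f_G(γ|a,c) f_F(φ|d,e) f_Y(y|x,e,φ,γ)`. -/
noncomputable def ehospInt {A B C D E F G X Y : Type*}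
    [Fintype A] [Fintype D] [Fintype E] [Fintype F] [Fintype G]
    (fA : A → ℝ) (fB : B → ℝ) (fD : A × B → D → ℝ)
    (fE : B × C → E → ℝ) (fG : A × C → G → ℝ) (fF : D × E → F → ℝ)
    (fY : X × E × F × G → Y → ℝ) (c : C) (x : X) (y : Y) (b : B) : ℝ :=
  ∑ a, ∑ d, ∑ e, ∑ φ, ∑ γ, fA a * fB b * fD (a, b) d * fE (b, c) e
    * fG (a, c) γ * fF (d, e) φ * fY (x, e, φ, γ) y

lemma sum_comm_1_3 {α δ ε ζ : Type*} [Fintype α] [Fintype δ] [Fintype ε] [Fintype ζ]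
    (f : α → δ → ε → ζ → ℝ) :
    ∑ a, ∑ d, ∑ e, ∑ g, f a d e g = ∑ d, ∑ e, ∑ g, ∑ a, f a d e g := by
  calc ∑ a, ∑ d, ∑ e, ∑ g, f a d e g
      = ∑ d, ∑ a, ∑ e, ∑ g, f a d e g := Finset.sum_comm
    _ = ∑ d, ∑ e, ∑ a, ∑ g, f a d e g :=
        Finset.sum_congr rfl fun d _ => Finset.sum_comm
    _ = ∑ d, ∑ e, ∑ g, ∑ a, f a d e g :=
        Finset.sum_congr rfl fun d _ => Finset.sum_congr rfl fun e _ => Finset.sum_comm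

lemma exists_delta {Z : Type*} [Fintype Z] (f : Z → ℝ)
    (h01 : ∀ z, f z = 0 ∨ f z = 1) (hs : ∑ z, f z = 1) :
    ∃ z₀, f z₀ = 1 ∧ ∀ z, z ≠ z₀ → f z = 0 := by
  have hex : ∃ z₀, f z₀ = 1 := by
    by_contra h
    push_neg at h
    have hz : ∀ z, f z = 0 := fun z => (h01 z).resolve_right (h z)
    simp [hz] at hs
  obtain ⟨z₀, hz₀⟩ := hex
  classical
  refine ⟨z₀, hz₀, fun z hz => ?_⟩
  by_contra hne
  have hz1 : f z = 1 := (h01 z).resolve_left hne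
  have hle : ∑ i ∈ ({z, z₀} : Finset Z), f i ≤ ∑ z, f z := by
    apply Finset.sum_le_sum_of_subset_of_nonneg (Finset.subset_univ _)
    intro i _ _
    rcases h01 i with h | h <;> simp [h]
  rw [Finset.sum_pair hz, hz1, hz₀, hs] at hle
  linarith

lemma pos_factor {p q : ℝ} (h : 0 < p * q) (hp : 0 ≤ p) (hq : 0 ≤ q) :
    0 < p ∧ 0 < q := by
  refine ⟨hp.lt_of_ne fun h0 => ?_, hq.lt_of_ne fun h0 => ?_⟩ <;>
    · rw [← h0] at h; simp at h

/-- Proposition 9, identifying formula for the context `B = b₀`, under the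
CFDs `[A, B=b₀] → D`, `[C, B=b₁] → E` and `[A, C=c₀] → G`. -/
theorem ehospital_identify_b0
    {A B C D E F G X Y : Type*}
    [Fintype A] [Fintype B] [Fintype C] [Fintype D] [Fintype E] [Fintype F]
    [Fintype G] [Fintype X] [Fintype Y]
    [Nonempty A] [Nonempty B] [Nonempty C] [Nonempty D] [Nonempty E] [Nonempty F]
    [Nonempty G] [Nonempty X] [Nonempty Y]
    (fA : A → ℝ) (fB : B → ℝ) (fC : C → ℝ) (fD : A × B → D → ℝ)
    (fE : B × C → E → ℝ) (fG : A × C → G → ℝ) (fF : D × E → F → ℝ)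
    (fX : D × G → X → ℝ) (fY : X × E × F × G → Y → ℝ)
    (hA : IsDist fA) (hB : IsDist fB) (hC : IsDist fC) (hD : IsCPT fD)
    (hE : IsCPT fE) (hG : IsCPT fG) (hF : IsCPT fF) (hX : IsCPT fX) (hY : IsCPT fY)
    (b₀ b₁ : B) (hne : b₀ ≠ b₁) (hbin : ∀ b : B, b = b₀ ∨ b = b₁)
    (c₀ : C) (x₀ : X) (y₀ : Y)
    (cfdD : ∀ (a : A) (d : D), fD (a, b₀) d = 0 ∨ fD (a, b₀) d = 1)
    (cfdE : ∀ (c : C) (e : E), fE (b₁, c) e = 0 ∨ fE (b₁, c) e = 1)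
    (cfdG : ∀ (a : A) (γ : G), fG (a, c₀) γ = 0 ∨ fG (a, c₀) γ = 1)
    (Pobs : A → B → C → F → X → Y → ℝ)
    (hPobs : ∀ a b c φ x y,
      Pobs a b c φ x y = ehospPr fA fB fC fD fE fG fF fX fY a b c φ x y)
    (hpos : ∀ a b c φ x y, 0 < Pobs a b c φ x y) :
    ehospInt fA fB fD fE fG fF fY c₀ x₀ y₀ b₀
      = (∑ a, ∑ c, ∑ φ, ∑ x, ∑ y, Pobs a b₀ c φ x y)
        * ∑ a,
            (∑ b, ∑ c, ∑ φ, ∑ x, ∑ y, Pobs a b c φ x y)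
            * ∑ φ, ((∑ x, ∑ y, Pobs a b₀ c₀ φ x y)
                      / (∑ φ', ∑ x, ∑ y, Pobs a b₀ c₀ φ' x y))
                * (Pobs a b₀ c₀ φ x₀ y₀ / ∑ y', Pobs a b₀ c₀ φ x₀ y') := by
  classical
  choose Da hDa1 hDa0 using fun a => exists_delta _ (cfdD a) (hD.2 (a, b₀))
  choose Ga hGa1 hGa0 using fun a => exists_delta _ (cfdG a) (hG.2 (a, c₀))
  -- total marginalization
  have h1 : ∀ a b c, ∑ φ, ∑ x, ∑ y, Pobs a b c φ x y = fA a * fB b * fC c := by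
    intro a b c
    simp only [hPobs, ehospPr]
    conv_lhs => enter [2, φ, 2, x]; rw [sum_comm_1_3]
    conv_lhs => enter [2, φ]; rw [sum_comm_1_3]
    rw [sum_comm_1_3]
    simp only [← Finset.mul_sum, hY.2, hX.2, hF.2, hG.2, hE.2, hD.2, mul_one]
  -- pointwise formula at (b₀, c₀)
  have h0 : ∀ a φ x y, Pobs a b₀ c₀ φ x y
      = ∑ e, fA a * fB b₀ * fC c₀ * fE (b₀, c₀) e * fF (Da a, e) φ
          * fX (Da a, Ga a) x * fY (x, e, φ, Ga a) y := by
    intro a φ x y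
    rw [hPobs]
    simp only [ehospPr]
    rw [Finset.sum_eq_single (Da a)]
    · refine Finset.sum_congr rfl fun e _ => ?_
      rw [Finset.sum_eq_single (Ga a)]
      · rw [hDa1 a, hGa1 a]; ring
      · intro γ _ hγ; simp [hGa0 a γ hγ]
      · intro h; exact absurd (Finset.mem_univ _) h
    · intro d _ hd; simp [hDa0 a d hd]
    · intro h; exact absurd (Finset.mem_univ _) h
  -- ∑_y at (b₀, c₀)
  have h2 : ∀ a φ x, ∑ y, Pobs a b₀ c₀ φ x y
      = fA a * fB b₀ * fC c₀ * (∑ e, fE (b₀, c₀) e * fF (Da a, e) φ)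
          * fX (Da a, Ga a) x := by
    intro a φ x
    simp only [h0]
    rw [Finset.sum_comm]
    simp only [← Finset.mul_sum, hY.2, mul_one]
    rw [Finset.mul_sum, Finset.sum_mul]
    exact Finset.sum_congr rfl fun e _ => by ring
  have h2sum : ∀ a φ, ∑ x, ∑ y, Pobs a b₀ c₀ φ x y
      = fA a * fB b₀ * fC c₀ * (∑ e, fE (b₀, c₀) e * fF (Da a, e) φ) := by
    intro a φ
    simp only [h2]
    rw [← Finset.mul_sum, hX.2, mul_one]
  -- ∑_φ Q = 1
  have hQ1 : ∀ a, ∑ φ, (∑ e, fE (b₀, c₀) e * fF (Da a, e) φ) = 1 := by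
    intro a
    rw [Finset.sum_comm]
    simp only [← Finset.mul_sum, hF.2, mul_one, hE.2]
  have h2sumφ : ∀ a, ∑ φ', ∑ x, ∑ y, Pobs a b₀ c₀ φ' x y
      = fA a * fB b₀ * fC c₀ := by
    intro a
    simp only [h2sum]
    rw [← Finset.mul_sum, hQ1, mul_one]
  have h3 : ∀ a φ, Pobs a b₀ c₀ φ x₀ y₀
      = fA a * fB b₀ * fC c₀ * fX (Da a, Ga a) x₀
          * (∑ e, fE (b₀, c₀) e * fF (Da a, e) φ * fY (x₀, e, φ, Ga a) y₀) := by
    intro a φ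
    rw [h0]
    rw [Finset.mul_sum]
    exact Finset.sum_congr rfl fun e _ => by ring
  -- positivity
  have hKQX : ∀ a φ, 0 < fA a * fB b₀ * fC c₀
      * (∑ e, fE (b₀, c₀) e * fF (Da a, e) φ) * fX (Da a, Ga a) x₀ := by
    intro a φ
    rw [← h2 a φ x₀]
    exact Finset.sum_pos (fun y _ => hpos a b₀ c₀ φ x₀ y) Finset.univ_nonempty
  have hKpos : ∀ a, 0 < fA a * fB b₀ * fC c₀ := by
    intro a
    rw [← h2sumφ a]
    exact Finset.sum_pos (fun φ _ => Finset.sum_pos (fun x _ =>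
      Finset.sum_pos (fun y _ => hpos a b₀ c₀ φ x y) Finset.univ_nonempty)
      Finset.univ_nonempty) Finset.univ_nonempty
  have hQnn : ∀ a φ, 0 ≤ ∑ e, fE (b₀, c₀) e * fF (Da a, e) φ := fun a φ =>
    Finset.sum_nonneg fun e _ => mul_nonneg (hE.1 _ _) (hF.1 _ _)
  have hQXpos : ∀ a φ, 0 < (∑ e, fE (b₀, c₀) e * fF (Da a, e) φ)
      ∧ 0 < fX (Da a, Ga a) x₀ := by
    intro a φ
    have h := hKQX a φ
    obtain ⟨hKQ, hXp⟩ := pos_factor h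
      (mul_nonneg (hKpos a).le (hQnn a φ)) (hX.1 _ _)
    exact ⟨(pos_factor hKQ (hKpos a).le (hQnn a φ)).2, hXp⟩
  -- the per-(a,φ) term of the RHS
  have hterm : ∀ a φ,
      ((∑ x, ∑ y, Pobs a b₀ c₀ φ x y)
          / (∑ φ', ∑ x, ∑ y, Pobs a b₀ c₀ φ' x y))
        * (Pobs a b₀ c₀ φ x₀ y₀ / ∑ y', Pobs a b₀ c₀ φ x₀ y')
      = ∑ e, fE (b₀, c₀) e * fF (Da a, e) φ * fY (x₀, e, φ, Ga a) y₀ := by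
    intro a φ
    rw [h2sum a φ, h2sumφ a, h3 a φ, h2 a φ x₀]
    have hK := hKpos a
    have hQ := (hQXpos a φ).1
    have hXp := (hQXpos a φ).2
    field_simp
    calc _ = (∑ e, fE (b₀, c₀) e * fF (Da a, e) φ * fY (x₀, e, φ, Ga a) y₀)
          * ((fA a * fB b₀ * fC c₀) * (fA a * fB b₀ * fC c₀)⁻¹) := by ring
      _ = _ := by rw [mul_inv_cancel₀ hK.ne', mul_one]
  -- marginals on the RHS
  have hS1 : ∑ a, ∑ c, ∑ φ, ∑ x, ∑ y, Pobs a b₀ c φ x y = fB b₀ := by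
    simp only [h1]
    simp only [← Finset.mul_sum, hC.2, mul_one]
    rw [← Finset.sum_mul, hA.2, one_mul]
  have hS2 : ∀ a, ∑ b, ∑ c, ∑ φ, ∑ x, ∑ y, Pobs a b c φ x y = fA a := by
    intro a
    simp only [h1]
    simp only [← Finset.mul_sum, hC.2, hB.2, mul_one]
  -- the interventional side
  have hL : ∀ a, (∑ d, ∑ e, ∑ φ, ∑ γ, fA a * fB b₀ * fD (a, b₀) d
        * fE (b₀, c₀) e * fG (a, c₀) γ * fF (d, e) φ * fY (x₀, e, φ, γ) y₀)
      = fA a * fB b₀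
          * ∑ φ, ∑ e, fE (b₀, c₀) e * fF (Da a, e) φ * fY (x₀, e, φ, Ga a) y₀ := by
    intro a
    rw [Finset.sum_eq_single (Da a)]
    · rw [Finset.sum_comm, Finset.mul_sum]
      refine Finset.sum_congr rfl fun φ _ => ?_
      rw [Finset.mul_sum]
      refine Finset.sum_congr rfl fun e _ => ?_
      rw [Finset.sum_eq_single (Ga a)]
      · rw [hDa1 a, hGa1 a]; ring
      · intro γ _ hγ; simp [hGa0 a γ hγ]
      · intro h; exact absurd (Finset.mem_univ _) h
    · intro d _ hd; simp [hDa0 a d hd]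
    · intro h; exact absurd (Finset.mem_univ _) h
  -- assemble
  simp only [ehospInt, hL, hterm, hS1, hS2]
  rw [Finset.mul_sum]
  exact Finset.sum_congr rfl fun a _ => by ring
end

section
/- (Proposition 9, identifying formula for the context B=b₁.) Let B be binary with states {b₀, b₁} and fix states c₀ of C, x₀ of X, y₀ of Y. Assume the conditional functional dependencies [A, B=b₀] → D, [C, B=b₁] → E, and [A, C=c₀] → G: for every a, f_D(·|a,b₀) ∈ {0,1}; for every c, f_E(·|b₁,c) ∈ {0,1}; and for every a, f_G(·|a,c₀) ∈ {0,1}. If the observational distribution is strictly positive, then Pr_{C=c₀,X=x₀}(Y=y₀, B=b₁) = Pr(B=b₁) · ∑_{a} Pr(A=a) · ∑_{φ} Pr(Y=y₀ | A=a, B=b₁, C=c₀, F=φ, X=x₀) · Pr(F=φ | A=a, B=b₁, C=c₀), where all marginal and conditional probabilities on the right-hand side are computed from the observational distribution Pr (conditionals as ratios). -/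
lemma dirac_of_01 {E : Type*} [Fintype E] (g : E → ℝ)
    (h01 : ∀ e, g e = 0 ∨ g e = 1) (hsum : ∑ e, g e = 1) :
    ∃ e₀, g e₀ = 1 ∧ ∀ e, e ≠ e₀ → g e = 0 := by
  have hex : ∃ e₀, g e₀ = 1 := by
    by_contra h
    push_neg at h
    have h0 : ∀ e, g e = 0 := fun e => (h01 e).resolve_right (h e)
    simp [h0] at hsum
  classical
  obtain ⟨e₀, he₀⟩ := hex
  refine ⟨e₀, he₀, fun e hne => ?_⟩
  rcases h01 e with h | h
  · exact h
  · exfalso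
    have hle : ∑ e' ∈ ({e, e₀} : Finset E), g e' ≤ ∑ e', g e' := by
      apply Finset.sum_le_sum_of_subset_of_nonneg (Finset.subset_univ _)
      intro i _ _
      rcases h01 i with hi | hi <;> simp [hi]
    rw [Finset.sum_pair hne, h, he₀, hsum] at hle
    linarith

lemma sum_dirac {E : Type*} [Fintype E] {g : E → ℝ} {e₀ : E} (h1 : g e₀ = 1)
    (h0 : ∀ e, e ≠ e₀ → g e = 0) (H : E → ℝ) : ∑ e, g e * H e = H e₀ := by
  rw [Finset.sum_eq_single e₀]
  · rw [h1, one_mul]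
  · intro e _ hne; rw [h0 e hne, zero_mul]
  · intro h; exact absurd (Finset.mem_univ e₀) h

lemma sum_push3 {ι₁ ι₂ ι₃ κ : Type*} [Fintype ι₁] [Fintype ι₂] [Fintype ι₃] [Fintype κ]
    (f : κ → ι₁ → ι₂ → ι₃ → ℝ) :
    ∑ k, ∑ i, ∑ j, ∑ l, f k i j l = ∑ i, ∑ j, ∑ l, ∑ k, f k i j l := by
  rw [Finset.sum_comm]
  exact Finset.sum_congr rfl fun i _ => by
    rw [Finset.sum_comm]
    exact Finset.sum_congr rfl fun j _ => Finset.sum_comm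



/-- Proposition 9, identifying formula for the context `B = b₁`, under the
CFDs `[A, B=b₀] → D`, `[C, B=b₁] → E` and `[A, C=c₀] → G`. -/
theorem ehospital_identify_b1
    {A B C D E F G X Y : Type*}
    [Fintype A] [Fintype B] [Fintype C] [Fintype D] [Fintype E] [Fintype F]
    [Fintype G] [Fintype X] [Fintype Y]
    [Nonempty A] [Nonempty B] [Nonempty C] [Nonempty D] [Nonempty E] [Nonempty F]
    [Nonempty G] [Nonempty X] [Nonempty Y]
    (fA : A → ℝ) (fB : B → ℝ) (fC : C → ℝ) (fD : A × B → D → ℝ)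
    (fE : B × C → E → ℝ) (fG : A × C → G → ℝ) (fF : D × E → F → ℝ)
    (fX : D × G → X → ℝ) (fY : X × E × F × G → Y → ℝ)
    (hA : IsDist fA) (hB : IsDist fB) (hC : IsDist fC) (hD : IsCPT fD)
    (hE : IsCPT fE) (hG : IsCPT fG) (hF : IsCPT fF) (hX : IsCPT fX) (hY : IsCPT fY)
    (b₀ b₁ : B) (hne : b₀ ≠ b₁) (hbin : ∀ b : B, b = b₀ ∨ b = b₁)
    (c₀ : C) (x₀ : X) (y₀ : Y)
    (cfdD : ∀ (a : A) (d : D), fD (a, b₀) d = 0 ∨ fD (a, b₀) d = 1)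
    (cfdE : ∀ (c : C) (e : E), fE (b₁, c) e = 0 ∨ fE (b₁, c) e = 1)
    (cfdG : ∀ (a : A) (γ : G), fG (a, c₀) γ = 0 ∨ fG (a, c₀) γ = 1)
    (Pobs : A → B → C → F → X → Y → ℝ)
    (hPobs : ∀ a b c φ x y,
      Pobs a b c φ x y = ehospPr fA fB fC fD fE fG fF fX fY a b c φ x y)
    (hpos : ∀ a b c φ x y, 0 < Pobs a b c φ x y) :
    ehospInt fA fB fD fE fG fF fY c₀ x₀ y₀ b₁
      = (∑ a, ∑ c, ∑ φ, ∑ x, ∑ y, Pobs a b₁ c φ x y)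
        * ∑ a,
            (∑ b, ∑ c, ∑ φ, ∑ x, ∑ y, Pobs a b c φ x y)
            * ∑ φ, (Pobs a b₁ c₀ φ x₀ y₀ / ∑ y', Pobs a b₁ c₀ φ x₀ y')
                * ((∑ x, ∑ y, Pobs a b₁ c₀ φ x y)
                      / (∑ φ', ∑ x, ∑ y, Pobs a b₁ c₀ φ' x y)) := by
  classical
  obtain ⟨e₀, he1, he0⟩ := dirac_of_01 (fE (b₁, c₀)) (cfdE c₀) (hE.2 (b₁, c₀))
  choose γf hγ1 hγ0 using fun a => dirac_of_01 (fG (a, c₀)) (cfdG a) (hG.2 (a, c₀))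
  -- closed form of Pobs in the context b₁, c₀
  have hP : ∀ a φ x y, Pobs a b₁ c₀ φ x y
      = fA a * fB b₁ * fC c₀
        * ∑ d, fD (a, b₁) d * fF (d, e₀) φ * fX (d, γf a) x
            * fY (x, e₀, φ, γf a) y := by
    intro a φ x y
    rw [hPobs]
    unfold ehospPr
    have hre : ∀ (d : D) (e : E) (γ : G),
        fA a * fB b₁ * fC c₀ * fD (a, b₁) d * fE (b₁, c₀) e * fG (a, c₀) γ
          * fF (d, e) φ * fX (d, γ) x * fY (x, e, φ, γ) y
        = fG (a, c₀) γ * (fE (b₁, c₀) e * (fA a * fB b₁ * fC c₀ * fD (a, b₁) d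
            * fF (d, e) φ * fX (d, γ) x * fY (x, e, φ, γ) y)) := by
      intros; ring
    simp_rw [hre, sum_dirac (hγ1 a) (hγ0 a), sum_dirac he1 he0, Finset.mul_sum]
    exact Finset.sum_congr rfl fun d _ => by ring
  -- marginalization of the inner sum in hP
  have hQy : ∀ a φ x, (∑ y, ∑ d, fD (a, b₁) d * fF (d, e₀) φ * fX (d, γf a) x
        * fY (x, e₀, φ, γf a) y)
      = ∑ d, fD (a, b₁) d * fF (d, e₀) φ * fX (d, γf a) x := by
    intro a φ x
    rw [Finset.sum_comm]
    exact Finset.sum_congr rfl fun d _ => by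
      rw [← Finset.mul_sum, hY.2, mul_one]
  -- positivity / nonvanishing of the factors
  have hA0 : ∀ a, fA a ≠ 0 := by
    intro a h
    have := hpos a b₁ c₀ (Classical.arbitrary F) x₀ y₀
    rw [hPobs] at this
    simp [ehospPr, h] at this
  have hB0 : fB b₁ ≠ 0 := by
    intro h
    have := hpos (Classical.arbitrary A) b₁ c₀ (Classical.arbitrary F) x₀ y₀
    rw [hPobs] at this
    simp [ehospPr, h] at this
  have hC0 : fC c₀ ≠ 0 := by
    intro h
    have := hpos (Classical.arbitrary A) b₁ c₀ (Classical.arbitrary F) x₀ y₀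
    rw [hPobs] at this
    simp [ehospPr, h] at this
  -- total mass of the observational distribution over φ, x, y
  have s1 : ∀ a b c φ x, ∑ y, Pobs a b c φ x y
      = ∑ d, ∑ e, ∑ γ, fA a * fB b * fC c * fD (a, b) d * fE (b, c) e
          * fG (a, c) γ * fF (d, e) φ * fX (d, γ) x := by
    intro a b c φ x
    simp_rw [hPobs]
    unfold ehospPr
    rw [sum_push3]
    refine Finset.sum_congr rfl fun d _ => Finset.sum_congr rfl fun e _ =>
      Finset.sum_congr rfl fun γ _ => ?_
    rw [← Finset.mul_sum, hY.2, mul_one]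
  have s2 : ∀ a b c φ, ∑ x, ∑ y, Pobs a b c φ x y
      = ∑ d, ∑ e, ∑ γ, fA a * fB b * fC c * fD (a, b) d * fE (b, c) e
          * fG (a, c) γ * fF (d, e) φ := by
    intro a b c φ
    simp_rw [s1]
    rw [sum_push3]
    refine Finset.sum_congr rfl fun d _ => Finset.sum_congr rfl fun e _ =>
      Finset.sum_congr rfl fun γ _ => ?_
    rw [← Finset.mul_sum, hX.2, mul_one]
  have hTot : ∀ a b c, ∑ φ, ∑ x, ∑ y, Pobs a b c φ x y = fA a * fB b * fC c := by
    intro a b c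
    simp_rw [s2]
    rw [sum_push3]
    have k1 : ∀ (d : D) (e : E) (γ : G),
        (∑ φ, fA a * fB b * fC c * fD (a, b) d * fE (b, c) e * fG (a, c) γ
          * fF (d, e) φ)
        = fA a * fB b * fC c * fD (a, b) d * fE (b, c) e * fG (a, c) γ := by
      intro d e γ
      rw [← Finset.mul_sum, hF.2, mul_one]
    simp_rw [k1]
    have k2 : ∀ (d : D) (e : E),
        (∑ γ, fA a * fB b * fC c * fD (a, b) d * fE (b, c) e * fG (a, c) γ)
        = fA a * fB b * fC c * fD (a, b) d * fE (b, c) e := by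
      intro d e
      rw [← Finset.mul_sum, hG.2, mul_one]
    simp_rw [k2]
    have k3 : ∀ (d : D),
        (∑ e, fA a * fB b * fC c * fD (a, b) d * fE (b, c) e)
        = fA a * fB b * fC c * fD (a, b) d := by
      intro d
      rw [← Finset.mul_sum, hE.2, mul_one]
    simp_rw [k3]
    rw [← Finset.mul_sum, hD.2, mul_one]
  -- the two marginals appearing in the formula
  have hBmarg : ∑ a, ∑ c, ∑ φ, ∑ x, ∑ y, Pobs a b₁ c φ x y = fB b₁ := by
    simp_rw [hTot, ← Finset.mul_sum, hC.2, mul_one]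
    rw [← Finset.sum_mul, hA.2, one_mul]
  have hAmarg : ∀ a, ∑ b, ∑ c, ∑ φ, ∑ x, ∑ y, Pobs a b c φ x y = fA a := by
    intro a
    simp_rw [hTot, ← Finset.mul_sum, hC.2, mul_one]
    have : ∀ b : B, fA a * fB b = fA a * fB b := fun _ => rfl
    rw [← Finset.mul_sum, hB.2, mul_one]
  -- first conditional ratio
  have hYden : ∀ a φ, ∑ y, Pobs a b₁ c₀ φ x₀ y
      = fA a * fB b₁ * fC c₀
        * ∑ d, fD (a, b₁) d * fF (d, e₀) φ * fX (d, γf a) x₀ := by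
    intro a φ
    simp_rw [hP]
    rw [← Finset.mul_sum, hQy]
  have ratio1 : ∀ a φ, Pobs a b₁ c₀ φ x₀ y₀ / (∑ y', Pobs a b₁ c₀ φ x₀ y')
      = fY (x₀, e₀, φ, γf a) y₀ := by
    intro a φ
    have hden : 0 < ∑ y', Pobs a b₁ c₀ φ x₀ y' :=
      Finset.sum_pos (fun y _ => hpos a b₁ c₀ φ x₀ y) Finset.univ_nonempty
    have hnum : Pobs a b₁ c₀ φ x₀ y₀
        = fY (x₀, e₀, φ, γf a) y₀ * ∑ y', Pobs a b₁ c₀ φ x₀ y' := by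
      rw [hP, hYden, Finset.mul_sum, Finset.mul_sum, Finset.mul_sum]
      exact Finset.sum_congr rfl fun d _ => by ring
    rw [hnum, mul_div_assoc, div_self hden.ne', mul_one]
  -- second conditional ratio
  have hxy : ∀ a φ, ∑ x, ∑ y, Pobs a b₁ c₀ φ x y
      = fA a * fB b₁ * fC c₀ * ∑ d, fD (a, b₁) d * fF (d, e₀) φ := by
    intro a φ
    simp_rw [hP, ← Finset.mul_sum]
    congr 1
    simp_rw [hQy]
    rw [Finset.sum_comm]
    exact Finset.sum_congr rfl fun d _ => by
      rw [← Finset.mul_sum, hX.2, mul_one]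
  have hφxy : ∀ a, ∑ φ, ∑ x, ∑ y, Pobs a b₁ c₀ φ x y
      = fA a * fB b₁ * fC c₀ := by
    intro a
    simp_rw [hxy]
    rw [← Finset.mul_sum]
    have : (∑ φ, ∑ d, fD (a, b₁) d * fF (d, e₀) φ) = 1 := by
      rw [Finset.sum_comm]
      calc (∑ d, ∑ φ, fD (a, b₁) d * fF (d, e₀) φ) = ∑ d, fD (a, b₁) d :=
            Finset.sum_congr rfl fun d _ => by
              rw [← Finset.mul_sum, hF.2, mul_one]
        _ = 1 := hD.2 _
    rw [this, mul_one]
  have ratio2 : ∀ a φ,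
      (∑ x, ∑ y, Pobs a b₁ c₀ φ x y) / (∑ φ', ∑ x, ∑ y, Pobs a b₁ c₀ φ' x y)
      = ∑ d, fD (a, b₁) d * fF (d, e₀) φ := by
    intro a φ
    rw [hxy, hφxy,
      mul_div_cancel_left₀ _ (mul_ne_zero (mul_ne_zero (hA0 a) hB0) hC0)]
  -- closed form of the interventional quantity
  have hInt : ehospInt fA fB fD fE fG fF fY c₀ x₀ y₀ b₁
      = ∑ a, ∑ d, ∑ φ, fA a * fB b₁ * fD (a, b₁) d * fF (d, e₀) φ
          * fY (x₀, e₀, φ, γf a) y₀ := by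
    unfold ehospInt
    refine Finset.sum_congr rfl fun a _ => ?_
    have hre : ∀ (d : D) (e : E) (φ : F) (γ : G),
        fA a * fB b₁ * fD (a, b₁) d * fE (b₁, c₀) e * fG (a, c₀) γ
          * fF (d, e) φ * fY (x₀, e, φ, γ) y₀
        = fG (a, c₀) γ * (fE (b₁, c₀) e * (fA a * fB b₁ * fD (a, b₁) d
            * fF (d, e) φ * fY (x₀, e, φ, γ) y₀)) := by
      intros; ring
    simp_rw [hre, sum_dirac (hγ1 a) (hγ0 a), ← Finset.mul_sum,
      sum_dirac he1 he0]
  -- assemble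
  rw [hInt, hBmarg]
  simp_rw [hAmarg, ratio1, ratio2, Finset.mul_sum]
  refine Finset.sum_congr rfl fun a _ => ?_
  rw [Finset.sum_comm]
  exact Finset.sum_congr rfl fun φ _ => Finset.sum_congr rfl fun d _ => by ring
end

section
/- (Proposition 9, unidentifiability half with B binary.) There exist finite state spaces for the variables (one may take A, B, C, D, E, F, X, Y binary, with B's states {b₀, b₁} and c₀ a state of C, and G with four states) and two models, i.e., two tuples of stochastic CPTs, both satisfying the conditional functional dependencies [A, B=b₀] → D, [C, B=b₁] → E, and [A, C=c₀] → G (f_D(·|a,b₀) ∈ {0,1} for every a; f_E(·|b₁,c) ∈ {0,1} for every c; f_G(·|a,c₀) ∈ {0,1} for every a), such that the induced observational distributions are equal and strictly positive, Pr¹ = Pr² > 0 on all instantiations of (A,B,C,F,X,Y), yet Pr¹_{C=c,X=x}(Y=y) ≠ Pr²_{C=c,X=x}(Y=y) for some states c, x, y, where Pr_{C=c,X=x}(Y=y) := ∑_{b} Pr_{C=c,X=x}(Y=y, B=b). -/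
/-- Marginal `1/2` distribution / CPT pieces used in the counterexample. -/
noncomputable def exHalf2 : Fin 2 → ℝ := fun _ => 1/2

noncomputable def exDet : Fin 2 × Fin 2 → Fin 2 → ℝ :=
  fun _ d => if d = 0 then 1 else 0

noncomputable def exF : Fin 2 × Fin 2 → Fin 2 → ℝ := fun _ _ => 1/2

noncomputable def exGg : Fin 2 × Fin 2 → Fin 4 → ℝ :=
  fun p γ => if p.2 = 0 then (if γ = 0 then 1 else 0) else 1/4

noncomputable def exGh : Fin 2 × Fin 2 → Fin 4 → ℝ :=
  fun p γ => if p.2 = 0 then (if γ = 0 then 1 else 0)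
    else if γ = 1 then 3/8 else if γ = 2 then 1/8 else 1/4

noncomputable def exX : Fin 2 × Fin 4 → Fin 2 → ℝ :=
  fun p x => if p.2 = 1 ∨ p.2 = 2 then (if x = 0 then 1 else 0) else 1/2

noncomputable def exY : Fin 2 × Fin 2 × Fin 2 × Fin 4 → Fin 2 → ℝ :=
  fun q y => if q.1 = 0 then 1/2
    else if q.2.2.2 = 1 then (if y = 0 then 1 else 0)
    else if q.2.2.2 = 2 then (if y = 0 then 0 else 1) else 1/2

lemma exHalf2_isDist : IsDist exHalf2 := by
  constructor
  · intro z; norm_num [exHalf2]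
  · simp [exHalf2, Fin.sum_univ_two]

lemma exDet_isCPT : IsCPT exDet := by
  constructor
  · intro p z; unfold exDet; split_ifs <;> norm_num
  · intro p; simp [exDet, Fin.sum_univ_two]

lemma exF_isCPT : IsCPT exF := by
  constructor
  · intro p z; norm_num [exF]
  · intro p; simp [exF, Fin.sum_univ_two]

lemma exGg_isCPT : IsCPT exGg := by
  constructor
  · intro p z; unfold exGg; split_ifs <;> norm_num
  · intro p; unfold exGg; rcases p with ⟨a, c⟩
    fin_cases c <;> simp [Fin.sum_univ_four] <;> norm_num

lemma exGh_isCPT : IsCPT exGh := by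
  constructor
  · intro p z; unfold exGh; split_ifs <;> norm_num
  · intro p; unfold exGh; rcases p with ⟨a, c⟩
    fin_cases c <;> simp [Fin.sum_univ_four] <;> norm_num

lemma exX_isCPT : IsCPT exX := by
  constructor
  · intro p z; unfold exX; split_ifs <;> norm_num
  · intro p; unfold exX; rcases p with ⟨d, γ⟩
    fin_cases γ <;> simp [Fin.sum_univ_two] <;> norm_num

lemma exY_isCPT : IsCPT exY := by
  constructor
  · intro p z; unfold exY; split_ifs <;> norm_num
  · intro p; unfold exY; rcases p with ⟨x, e, φ, γ⟩
    fin_cases x <;> fin_cases γ <;> simp [Fin.sum_univ_two] <;> norm_num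

/-- Proposition 9, unidentifiability half with `B` binary: with
`A, B, C, D, E, F, X, Y` binary and `G` with four states, there are two models
(CPTs `g…` and `h…`) satisfying the CFDs `[A, B=b₀] → D`, `[C, B=b₁] → E` and
`[A, C=c₀] → G` that induce the same strictly positive observational
distribution but disagree on `Pr_{C=c,X=x}(Y=y) = ∑_b Pr_{C=c,X=x}(Y=y, B=b)`
for some `c, x, y`. -/
theorem ehospital_unidentifiable_binaryB :
    ∃ (b₀ b₁ : Fin 2), b₀ ≠ b₁ ∧
    ∃ (c₀ : Fin 2)
      (gA hA gB hB gC hC : Fin 2 → ℝ)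
      (gD hD : Fin 2 × Fin 2 → Fin 2 → ℝ)
      (gE hE : Fin 2 × Fin 2 → Fin 2 → ℝ)
      (gG hG : Fin 2 × Fin 2 → Fin 4 → ℝ)
      (gF hF : Fin 2 × Fin 2 → Fin 2 → ℝ)
      (gX hX : Fin 2 × Fin 4 → Fin 2 → ℝ)
      (gY hY : Fin 2 × Fin 2 × Fin 2 × Fin 4 → Fin 2 → ℝ),
      IsDist gA ∧ IsDist hA ∧ IsDist gB ∧ IsDist hB ∧ IsDist gC ∧ IsDist hC ∧
      IsCPT gD ∧ IsCPT hD ∧ IsCPT gE ∧ IsCPT hE ∧ IsCPT gG ∧ IsCPT hG ∧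
      IsCPT gF ∧ IsCPT hF ∧ IsCPT gX ∧ IsCPT hX ∧ IsCPT gY ∧ IsCPT hY ∧
      (∀ (a d : Fin 2), gD (a, b₀) d = 0 ∨ gD (a, b₀) d = 1) ∧
      (∀ (a d : Fin 2), hD (a, b₀) d = 0 ∨ hD (a, b₀) d = 1) ∧
      (∀ (c e : Fin 2), gE (b₁, c) e = 0 ∨ gE (b₁, c) e = 1) ∧
      (∀ (c e : Fin 2), hE (b₁, c) e = 0 ∨ hE (b₁, c) e = 1) ∧
      (∀ (a : Fin 2) (γ : Fin 4), gG (a, c₀) γ = 0 ∨ gG (a, c₀) γ = 1) ∧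
      (∀ (a : Fin 2) (γ : Fin 4), hG (a, c₀) γ = 0 ∨ hG (a, c₀) γ = 1) ∧
      (∀ a b c φ x y, ehospPr gA gB gC gD gE gG gF gX gY a b c φ x y
                        = ehospPr hA hB hC hD hE hG hF hX hY a b c φ x y) ∧
      (∀ a b c φ x y, 0 < ehospPr gA gB gC gD gE gG gF gX gY a b c φ x y) ∧
      ∃ c x y, (∑ b, ehospInt gA gB gD gE gG gF gY c x y b)
                 ≠ (∑ b, ehospInt hA hB hD hE hG hF hY c x y b) := by
  refine ⟨0, 1, by decide, 0, exHalf2, exHalf2, exHalf2, exHalf2, exHalf2, exHalf2,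
    exDet, exDet, exDet, exDet, exGg, exGh, exF, exF, exX, exX, exY, exY,
    exHalf2_isDist, exHalf2_isDist, exHalf2_isDist, exHalf2_isDist,
    exHalf2_isDist, exHalf2_isDist,
    exDet_isCPT, exDet_isCPT, exDet_isCPT, exDet_isCPT,
    exGg_isCPT, exGh_isCPT, exF_isCPT, exF_isCPT, exX_isCPT, exX_isCPT,
    exY_isCPT, exY_isCPT,
    ?_, ?_, ?_, ?_, ?_, ?_, ?_, ?_, ?_⟩
  · intro a d; unfold exDet; by_cases h : d = 0 <;> simp [h]
  · intro a d; unfold exDet; by_cases h : d = 0 <;> simp [h]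
  · intro c e; unfold exDet; by_cases h : e = 0 <;> simp [h]
  · intro c e; unfold exDet; by_cases h : e = 0 <;> simp [h]
  · intro a γ; unfold exGg; by_cases h : γ = 0 <;> simp [h]
  · intro a γ; unfold exGh; by_cases h : γ = 0 <;> simp [h]
  · intro a b c φ x y
    simp only [ehospPr, exHalf2, exDet, exGg, exGh, exF, exX, exY]
    fin_cases c <;> fin_cases x <;> fin_cases y <;>
      simp [Fin.sum_univ_two, Fin.sum_univ_four] <;> norm_num
  · intro a b c φ x y
    simp only [ehospPr, exHalf2, exDet, exGg, exGh, exF, exX, exY]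
    fin_cases c <;> fin_cases x <;> fin_cases y <;>
      simp [Fin.sum_univ_two, Fin.sum_univ_four] <;> norm_num
  · refine ⟨1, 1, 0, ?_⟩
    simp only [ehospInt, exHalf2, exDet, exGg, exGh, exF, exY]
    simp [Fin.sum_univ_two, Fin.sum_univ_four]
    norm_num
end
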